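/- arXiv:2204.12871 — 2 statements merged into one kernel-verified Lean document; each statement's English description precedes it below -/
import Mathlib

section
/- Let B be a rare basis in ℝⁿ. Suppose there exist an increasing sequence of natural numbers k_j ≥ n and a sequence of sets Ω_j ⊂ Ω_{n,k_j} such that B is Ω_j-complete for every j ∈ ℕ and inf_{j∈ℕ} card(Ω_j)/k_j^{n−1} > 0. Then for every j ∈ ℕ there exists a bounded set E_j ⊂ ℝⁿ of positive Lebesgue measure such that |{x ∈ ℝⁿ : M_B(χ_{E_j})(x) ≥ 1/2^{k_j}}| ≥ c_B · k_j^{n−1} · 2^{k_j} · |E_j|, where c_B = cₙ · inf_{j∈ℕ} card(Ω_j)/k_j^{n−1} and cₙ > 0 depends only on n. -/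
open MeasureTheory Set
open scoped ENNReal

noncomputable section

/-- An axis-parallel interval (box) in `ℝⁿ`, given by its left and right endpoints. -/
structure BoxInterval (n : ℕ) where
  a : Fin n → ℝ
  b : Fin n → ℝ
  hab : ∀ j, a j < b j

namespace BoxInterval

/-- The underlying set of a box. -/
def toSet {n : ℕ} (R : BoxInterval n) : Set (Fin n → ℝ) :=
  Set.univ.pi fun j => Set.Icc (R.a j) (R.b j)

/-- The side length of a box in direction `j`. -/
def side {n : ℕ} (R : BoxInterval n) (j : Fin n) : ℝ := R.b j - R.a j

/-- Translation of a box by a vector `v`. -/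
def translate {n : ℕ} (R : BoxInterval n) (v : Fin n → ℝ) : BoxInterval n where
  a := fun j => R.a j + v j
  b := fun j => R.b j + v j
  hab := fun j => by linarith [R.hab j]

end BoxInterval

/-- A rare basis in `ℝⁿ`: a nonempty translation-invariant collection of intervals. -/
def IsRareBasis {n : ℕ} (B : Set (BoxInterval n)) : Prop :=
  B.Nonempty ∧ ∀ R ∈ B, ∀ v : Fin n → ℝ, R.translate v ∈ B

/-- The geometric maximal operator `M_B` associated with a collection `B` of boxes:
`M_B f (x) = sup { (1/|R|) ∫_R |f| : x ∈ R ∈ B }`. -/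
def maxOp {n : ℕ} (B : Set (BoxInterval n)) (f : (Fin n → ℝ) → ℝ)
    (x : Fin n → ℝ) : ℝ≥0∞ :=
  ⨆ (R : BoxInterval n) (_ : R ∈ B) (_ : x ∈ R.toSet),
    (∫⁻ y in R.toSet, ENNReal.ofReal |f y| ∂volume) / volume R.toSet

/-- The spectrum `W_B ⊂ ℤⁿ` of a collection of boxes: all tuples
`(⌈log₂ |R₁|⌉, …, ⌈log₂ |Rₙ|⌉)` over boxes `R₁ × ⋯ × Rₙ ∈ B`. -/
def spectrumB {n : ℕ} (B : Set (BoxInterval n)) : Set (Fin n → ℤ) :=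
  {w | ∃ R ∈ B, ∀ j, w j = ⌈Real.logb 2 (R.side j)⌉}

/-- The slice `W_t` of `W ⊂ ℤ^{k+1}` over `t ∈ ℤᵏ`. -/
def sliceZ {k : ℕ} (W : Set (Fin (k + 1) → ℤ)) (t : Fin k → ℤ) : Set ℤ :=
  {τ | Fin.snoc t τ ∈ W}

/-- `W` is a net for `S` in `ℤ^{k+1}`: every slice of `W` is a one-dimensional
net for the corresponding slice of `S`. -/
def IsNetMulti {k : ℕ} (W S : Set (Fin (k + 1) → ℤ)) : Prop :=
  ∀ t : Fin k → ℤ, ∃ N : ℕ, ∀ τ ∈ sliceZ S t, ∃ w ∈ sliceZ W t, |τ - w| ≤ (N : ℤ)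

/-- Projection of `W ⊂ ℤⁿ` onto the first `k` coordinates. -/
def projZ {n : ℕ} (k : ℕ) (hk : k ≤ n) (W : Set (Fin n → ℤ)) : Set (Fin k → ℤ) :=
  (fun w (i : Fin k) => w (Fin.castLE hk i)) '' W

/-- `W ⊂ ℤⁿ` is dense in `S₁ × ⋯ × Sₙ`: for each `k`, `π_{k+1}(W)` is a net for
`π_k(W) × S_{k+1}`. -/
def IsDenseIn {n : ℕ} (W : Set (Fin n → ℤ)) (S : Fin n → Set ℤ) : Prop :=
  ∀ k : Fin n,
    IsNetMulti (projZ (k.val + 1) k.isLt W)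
      {v : Fin (k.val + 1) → ℤ |
        Fin.init v ∈ projZ k.val (Nat.le_of_lt k.isLt) W ∧ v (Fin.last k.val) ∈ S k}

/-- `Ω_{n,k}`: the set of `n`-tuples of positive integers summing to `k`. -/
def OmegaNK (n k : ℕ) : Set (Fin n → ℕ) :=
  {m | (∀ j, 1 ≤ m j) ∧ ∑ j, m j = k}

/-- The smallest box concentric with `R`, containing `R`, with dyadic side lengths. -/
def dyadicHull {n : ℕ} (R : BoxInterval n) : BoxInterval n where
  a := fun j => (R.a j + R.b j) / 2 - (2:ℝ) ^ ⌈Real.logb 2 (R.side j)⌉ / 2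
  b := fun j => (R.a j + R.b j) / 2 + (2:ℝ) ^ ⌈Real.logb 2 (R.side j)⌉ / 2
  hab := fun j => by
    have h : (0:ℝ) < (2:ℝ) ^ ⌈Real.logb 2 (R.side j)⌉ := by positivity
    linarith

/-- The dyadic skeleton `B_d` of a collection `B`. -/
def dyadicSkeleton {n : ℕ} (B : Set (BoxInterval n)) : Set (BoxInterval n) :=
  {Rd | ∃ R ∈ B, Rd = dyadicHull R}

/-- `B` is `Ω`-complete (for `Ω ⊆ Ω_{n,k}`). -/
def OmegaComplete {n : ℕ} (B : Set (BoxInterval n)) (k : ℕ) (Ω : Set (Fin n → ℕ)) : Prop :=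
  ∃ s : Fin n → ℕ → ℤ,
    (∀ j, ∀ m, m < k → s j m < s j (m + 1)) ∧
    ∀ m ∈ Ω, ∃ R ∈ dyadicSkeleton B, ∀ j,
      R.side j ∈ Set.Ioc ((2:ℝ) ^ s j (m j - 1)) ((2:ℝ) ^ s j (m j))

/-- Product of an `n`-dimensional box and a one-dimensional box. -/
def prodBox {n : ℕ} (J1 : BoxInterval n) (J2 : BoxInterval 1) : BoxInterval (n + 1) where
  a := Fin.snoc J1.a (J2.a 0)
  b := Fin.snoc J1.b (J2.b 0)
  hab := fun j => by
    induction j using Fin.lastCases with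
    | last => simpa using J2.hab 0
    | cast i => simpa using J1.hab i

/-- The product basis `B₁ × B₂`. -/
def prodBasis {n : ℕ} (B1 : Set (BoxInterval n)) (B2 : Set (BoxInterval 1)) :
    Set (BoxInterval (n + 1)) :=
  {R | ∃ J1 ∈ B1, ∃ J2 ∈ B2, R = prodBox J1 J2}

/-- The (is)-property of a rare basis in `ℝ²`. -/
def ISProperty (B : Set (BoxInterval 2)) : Prop :=
  ∀ k : ℕ, ∃ R : Fin (k + 1) → BoxInterval 2,
    (∀ i, R i ∈ B) ∧
    (∀ i, (R i).a = fun _ => 0) ∧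
    (∀ i, ∃ pq : Fin 2 → ℤ, ∀ l, (R i).b l = (2:ℝ) ^ pq l) ∧
    (∀ i j, i ≠ j → ∀ v : Fin 2 → ℝ, ¬ ((R i).translate v).toSet ⊆ (R j).toSet) ∧
    (∀ i j, ∃ Q ∈ B, Q.toSet = (R i).toSet ∩ (R j).toSet)

/-!
Fix scales `s_j(0) < ⋯ < s_j(k)` witnessing the `Ω`-completeness of `B`, and let `E` be the
product over `j` of the points of `[0, 2 ^ s_j(k))` whose binary digits at the positions
`s_j(1), …, s_j(k - 1)` all equal `1`.

For `m ∈ Ω`, completeness gives a box `Q ∈ B` with side lengths in `(2 ^ (t_j - 1), 2 ^ t_j]`,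
where `s_j(m_j - 1) < t_j ≤ s_j(m_j)`. Let `U_m` be the set of points whose digits at the
positions `t_j - 1` and `s_j(m_j), …, s_j(k - 1)` equal `1`. For `x ∈ U_m`, a translate of `Q`
contains the dyadic cube of side lengths `2 ^ (t_j - 1)` around `x`, and inside that cube `E`
only prescribes the at most `m_j - 1` digits below `t_j - 1`; so `E` fills a fraction
`≥ 2 ^ (-∑ m_j) = 2 ^ (-k)` of the translate, and `U_m` lies in the level set.

Each `U_m` has measure `2 ^ k 4 ^ (-n) |E|`, and the digit conditions of `U_m` and `U_m'`
together fix the digits at `s_j(min (m_j, m'_j)), …`, which gives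
`|U_m ∩ U_m'| ≤ 2 ^ n (3/4) ^ |m - m'|₁ |U_m|`. Summing the geometric series, Cauchy–Schwarz
shows that the union of the `U_m` has measure `≥ 14 ^ (-n) card Ω 2 ^ k 4 ^ (-n) |E|`.
-/

/-- The points of the dyadic interval `[z 2^r, (z + 1) 2^r)` whose binary digit is `1` at every
position `p ∈ P`. -/
def digitBlock (P : Finset ℤ) (r z : ℤ) : Set ℝ :=
  {x | ⌊x / 2 ^ r⌋ = z ∧ ∀ p ∈ P, Odd ⌊x / 2 ^ p⌋}

section DyadicDigits

theorem floor_div_two_zpow_of_le {t p : ℤ} (htp : t ≤ p) (x : ℝ) :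
    ⌊x / 2 ^ p⌋ = ⌊x / 2 ^ t⌋ / 2 ^ (p - t).toNat := by
  have hpow : (2 : ℝ) ^ p = 2 ^ t * ((2 ^ (p - t).toNat : ℕ) : ℝ) := by
    rw [Nat.cast_pow, Nat.cast_ofNat, ← zpow_natCast, ← zpow_add₀ two_ne_zero]
    congr 1
    omega
  rw [hpow, ← div_div, Int.floor_div_natCast]
  push_cast
  rfl

theorem floor_div_two_zpow_congr {x y : ℝ} {t p : ℤ} (hxy : ⌊x / 2 ^ t⌋ = ⌊y / 2 ^ t⌋)
    (htp : t ≤ p) : ⌊x / 2 ^ p⌋ = ⌊y / 2 ^ p⌋ := by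
  rw [floor_div_two_zpow_of_le htp, floor_div_two_zpow_of_le htp, hxy]

theorem floor_div_two_zpow_eq_iff {x : ℝ} {r z : ℤ} :
    ⌊x / 2 ^ r⌋ = z ↔ x ∈ Ico ((z : ℝ) * 2 ^ r) ((z + 1) * 2 ^ r) := by
  have h2 : (0 : ℝ) < 2 ^ r := zpow_pos two_pos r
  rw [Int.floor_eq_iff, le_div_iff₀ h2, div_lt_iff₀ h2, mem_Ico]

theorem measurableSet_digitBlock (P : Finset ℤ) (r z : ℤ) :
    MeasurableSet (digitBlock P r z) := by
  have hfloor (q : ℤ) : Measurable fun x : ℝ => ⌊x / 2 ^ q⌋ :=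
    Int.measurable_floor.comp (measurable_id.div_const _)
  have hblock : digitBlock P r z = (fun x : ℝ => ⌊x / 2 ^ r⌋) ⁻¹' {z} ∩
      ⋂ p ∈ P, (fun x : ℝ => ⌊x / 2 ^ p⌋) ⁻¹' {w | Odd w} := by
    ext; simp [digitBlock]
  rw [hblock]
  exact (hfloor r (measurableSet_singleton z)).inter
    (.biInter P.countable_toSet fun p _ => hfloor p trivial)

theorem digitBlock_anti {P P' : Finset ℤ} (h : P ⊆ P') (r z : ℤ) :
    digitBlock P' r z ⊆ digitBlock P r z :=
  fun _ hx => ⟨hx.1, fun p hp => hx.2 p (h hp)⟩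

theorem digitBlock_succ (P : Finset ℤ) (r z : ℤ) :
    digitBlock P (r + 1) z = digitBlock P r (2 * z) ∪ digitBlock P r (2 * z + 1) := by
  ext x
  have hfloor := floor_div_two_zpow_of_le (Int.le_add_one le_rfl : r ≤ r + 1) x
  simp only [add_sub_cancel_left, Int.toNat_one, pow_one] at hfloor
  have hhalf :
      ⌊x / 2 ^ r⌋ / 2 = z ↔ ⌊x / 2 ^ r⌋ = 2 * z ∨ ⌊x / 2 ^ r⌋ = 2 * z + 1 := by
    omega
  simp only [digitBlock, mem_ofPred_eq, mem_union, hfloor, hhalf, or_and_right]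

theorem digitBlock_two_mul_eq_empty {P : Finset ℤ} {r : ℤ} (hr : r ∈ P) (z : ℤ) :
    digitBlock P r (2 * z) = ∅ :=
  eq_empty_of_forall_notMem fun _ hx =>
    Int.not_odd_iff_even.mpr (even_two_mul z) (hx.1 ▸ hx.2 r hr)

theorem digitBlock_two_mul_add_one (P : Finset ℤ) (r z : ℤ) :
    digitBlock P r (2 * z + 1) = digitBlock (P.erase r) r (2 * z + 1) := by
  ext x
  refine ⟨fun hx => digitBlock_anti (P.erase_subset r) _ _ hx, fun hx => ⟨hx.1, fun p hp => ?_⟩⟩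
  rcases eq_or_ne p r with rfl | hpr
  · rw [hx.1]; exact odd_two_mul_add_one z
  · exact hx.2 p (Finset.mem_erase.mpr ⟨hpr, hp⟩)

theorem volume_digitBlock_of_forall_mem_Ico {r₀ r : ℤ} (hr : r₀ ≤ r) {P : Finset ℤ}
    (hP : ∀ p ∈ P, p ∈ Ico r₀ r) (z : ℤ) :
    volume (digitBlock P r z) = ENNReal.ofReal (2 ^ (r - P.card)) := by
  induction r, hr using Int.leInduction generalizing P z with
  | base =>
    obtain rfl : P = ∅ := Finset.eq_empty_of_forall_notMem fun p hp =>
      (lt_irrefl _ ((hP p hp).1.trans_lt (hP p hp).2))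
    have hblock : digitBlock ∅ r₀ z = Ico ((z : ℝ) * 2 ^ r₀) ((z + 1) * 2 ^ r₀) := by
      ext x; simp [digitBlock, floor_div_two_zpow_eq_iff]
    rw [hblock, Real.volume_Ico]
    simp only [Finset.card_empty, Nat.cast_zero, sub_zero]
    congr 1; ring
  | succ r _ ih =>
    have hdisj : Disjoint (digitBlock P r (2 * z)) (digitBlock P r (2 * z + 1)) :=
      Set.disjoint_left.mpr fun x hx hx' => by have := hx.1.symm.trans hx'.1; omega
    have hdouble : (2 : ℝ) ^ (r + 1 - P.card) = 2 ^ (r - P.card) + 2 ^ (r - P.card) := by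
      rw [show r + 1 - (P.card : ℤ) = r - P.card + 1 by ring, zpow_add_one₀ two_ne_zero]
      ring
    rw [digitBlock_succ, measure_union hdisj (measurableSet_digitBlock _ _ _)]
    by_cases hr : r ∈ P
    · -- the digit at position `r` singles out the upper half
      rw [digitBlock_two_mul_eq_empty hr, measure_empty, zero_add, digitBlock_two_mul_add_one,
        ih (fun p hp => ?_) _, Finset.card_erase_of_mem hr,
        Nat.cast_sub (Finset.card_pos.mpr ⟨r, hr⟩)]
      · congr 2; ring
      · have hp' := hP p (Finset.mem_of_mem_erase hp)
        have := Finset.ne_of_mem_erase hp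
        rw [mem_Ico] at hp' ⊢
        omega
    · have hP' : ∀ p ∈ P, p ∈ Ico r₀ r := fun p hp => by
        have hp' := hP p hp
        have : p ≠ r := fun h => hr (h ▸ hp)
        rw [mem_Ico] at hp' ⊢
        omega
      rw [ih hP', ih hP', hdouble, ENNReal.ofReal_add (zpow_pos two_pos _).le
        (zpow_pos two_pos _).le]

theorem volume_digitBlock {P : Finset ℤ} {r : ℤ} (hP : ∀ p ∈ P, p < r) (z : ℤ) :
    volume (digitBlock P r z) = ENNReal.ofReal (2 ^ (r - P.card)) := by
  obtain ⟨b, hb⟩ := P.bddBelow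
  exact volume_digitBlock_of_forall_mem_Ico (min_le_right b r)
    (fun p hp => ⟨(min_le_left b r).trans (hb hp), hP p hp⟩) z

theorem prod_two_zpow {ι : Type*} (S : Finset ι) (c : ι → ℤ) :
    ∏ i ∈ S, (2 : ℝ) ^ c i = 2 ^ ∑ i ∈ S, c i := by
  classical
  induction S using Finset.induction_on with
  | empty => simp
  | insert i S hi ih =>
    rw [Finset.prod_insert hi, Finset.sum_insert hi, ih, zpow_add₀ two_ne_zero]

theorem volume_pi_digitBlock {n : ℕ} {P : Fin n → Finset ℤ} {r : Fin n → ℤ}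
    (hP : ∀ j, ∀ p ∈ P j, p < r j) (z : Fin n → ℤ) :
    volume (univ.pi fun j => digitBlock (P j) (r j) (z j)) =
      ENNReal.ofReal (2 ^ ∑ j, (r j - (P j).card)) := by
  rw [volume_pi_pi, ← prod_two_zpow, ENNReal.ofReal_prod_of_nonneg fun j _ =>
    (zpow_pos two_pos _).le]
  exact Finset.prod_congr rfl fun j _ => volume_digitBlock (hP j) (z j)

end DyadicDigits

section Boxes

variable {n : ℕ}

theorem BoxInterval.volume_toSet (R : BoxInterval n) :
    volume R.toSet = ENNReal.ofReal (∏ j, R.side j) := by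
  have hside (j : Fin n) (_ : j ∈ Finset.univ) : 0 ≤ R.side j := (sub_pos.mpr (R.hab j)).le
  rw [BoxInterval.toSet, volume_pi_pi, ENNReal.ofReal_prod_of_nonneg hside]
  simp only [Real.volume_Icc, BoxInterval.side]

theorem BoxInterval.side_translate (R : BoxInterval n) (v : Fin n → ℝ) (j : Fin n) :
    (R.translate v).side j = R.side j := by
  simp only [BoxInterval.side, BoxInterval.translate]
  ring

theorem BoxInterval.pi_Icc_subset_translate (Q : BoxInterval n) {ℓ : Fin n → ℝ}
    (hℓ : ∀ j, ℓ j ≤ Q.side j) (b : Fin n → ℝ) :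
    univ.pi (fun j => Icc (b j - ℓ j) (b j)) ⊆ (Q.translate fun j => b j - Q.b j).toSet := by
  refine pi_mono fun j _ => Icc_subset_Icc ?_ ?_ <;>
    simp only [BoxInterval.translate] <;> linarith [hℓ j, show Q.side j = Q.b j - Q.a j from rfl]

theorem measure_inter_div_le_maxOp {B : Set (BoxInterval n)} {R : BoxInterval n} (hR : R ∈ B)
    {x : Fin n → ℝ} (hx : x ∈ R.toSet) {E : Set (Fin n → ℝ)} (hE : MeasurableSet E) :
    volume (E ∩ R.toSet) / volume R.toSet ≤ maxOp B (E.indicator fun _ => 1) x := by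
  have hindicator : (fun y => ENNReal.ofReal |E.indicator (fun _ => (1 : ℝ)) y|) =
      E.indicator fun _ => 1 := by
    ext y
    by_cases hy : y ∈ E <;> simp [hy]
  refine le_iSup₂_of_le R hR (le_iSup_of_le hx (le_of_eq ?_))
  rw [hindicator, ← Pi.one_def, lintegral_indicator_one hE, Measure.restrict_apply hE]

end Boxes

section CauchySchwarz

variable {α : Type*} [MeasurableSpace α] (μ : Measure α)

theorem sq_lintegral_le_measure_mul_lintegral_sq {f : α → ℝ≥0∞} (hf : Measurable f)
    {T : Set α} (hT : MeasurableSet T) (hfT : ∀ x ∉ T, f x = 0) :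
    (∫⁻ x, f x ∂μ) ^ 2 ≤ μ T * ∫⁻ x, f x ^ 2 ∂μ := by
  have hf_eq : f = T.indicator 1 * f := by
    ext x
    by_cases hx : x ∈ T <;> simp [hx, hfT]
  have hone_sq (x : α) : T.indicator (1 : α → ℝ≥0∞) x ^ 2 = T.indicator 1 x := by
    by_cases hx : x ∈ T <;> simp [hx]
  have hholder := ENNReal.lintegral_mul_le_Lp_mul_Lq μ Real.HolderConjugate.two_two
    ((measurable_one.indicator hT).aemeasurable) hf.aemeasurable
  simp only [← hf_eq, hone_sq, lintegral_indicator_one hT, ENNReal.rpow_two] at hholder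
  calc (∫⁻ x, f x ∂μ) ^ 2
      ≤ (μ T ^ (1 / 2 : ℝ) * (∫⁻ x, f x ^ 2 ∂μ) ^ (1 / 2 : ℝ)) ^ 2 := by gcongr
    _ = μ T * ∫⁻ x, f x ^ 2 ∂μ := by
      rw [mul_pow, ← ENNReal.rpow_natCast, ← ENNReal.rpow_natCast, ← ENNReal.rpow_mul,
        ← ENNReal.rpow_mul]
      norm_num

theorem sum_measure_le_mul_measure_biUnion {ι : Type*} (F : Finset ι) {U : ι → Set α}
    (hU : ∀ i ∈ F, MeasurableSet (U i)) (hUfin : ∀ i ∈ F, μ (U i) ≠ ∞) {C : ℝ≥0∞}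
    (hC : ∀ i ∈ F, ∑ i' ∈ F, μ (U i ∩ U i') ≤ C * μ (U i)) :
    ∑ i ∈ F, μ (U i) ≤ C * μ (⋃ i ∈ F, U i) := by
  set f : α → ℝ≥0∞ := fun x => ∑ i ∈ F, (U i).indicator 1 x
  have hmeas : ∀ i ∈ F, Measurable ((U i).indicator (1 : α → ℝ≥0∞)) :=
    fun i hi => measurable_one.indicator (hU i hi)
  have hf : ∫⁻ x, f x ∂μ = ∑ i ∈ F, μ (U i) := by
    rw [lintegral_finsetSum' F fun i hi => (hmeas i hi).aemeasurable]
    exact Finset.sum_congr rfl fun i hi => lintegral_indicator_one (hU i hi)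
  have hf_sq : ∫⁻ x, f x ^ 2 ∂μ = ∑ i ∈ F, ∑ i' ∈ F, μ (U i ∩ U i') := by
    have hpoint (x : α) :
        f x ^ 2 = ∑ i ∈ F, ∑ i' ∈ F, (U i ∩ U i').indicator 1 x := by
      simp only [f, sq, Finset.sum_mul_sum, inter_indicator_one, Pi.mul_apply]
    have hmeas' :
        ∀ i ∈ F, ∀ i' ∈ F, Measurable ((U i ∩ U i').indicator (1 : α → ℝ≥0∞)) :=
      fun i hi i' hi' => measurable_one.indicator ((hU i hi).inter (hU i' hi'))
    rw [lintegral_congr hpoint, lintegral_finsetSum' F fun i hi =>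
      (Finset.measurable_sum F (hmeas' i hi)).aemeasurable]
    refine Finset.sum_congr rfl fun i hi => ?_
    rw [lintegral_finsetSum' F fun i' hi' => (hmeas' i hi i' hi').aemeasurable]
    exact Finset.sum_congr rfl fun i' hi' => lintegral_indicator_one ((hU i hi).inter (hU i' hi'))
  have hcs := sq_lintegral_le_measure_mul_lintegral_sq μ (Finset.measurable_sum F hmeas)
    (MeasurableSet.biUnion F.countable_toSet hU) fun x hx => Finset.sum_eq_zero fun i hi =>
      indicator_of_notMem (fun hxi => hx (mem_biUnion hi hxi)) _
  rw [hf, hf_sq] at hcs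
  set X := ∑ i ∈ F, μ (U i)
  rcases eq_or_ne X 0 with hX | hX
  · simp [hX]
  have hXtop : X ≠ ∞ := (ENNReal.sum_lt_top.mpr fun i hi => (hUfin i hi).lt_top).ne
  refine (ENNReal.mul_le_mul_iff_left hX hXtop).mp ?_
  calc X * X = X ^ 2 := (sq X).symm
    _ ≤ μ (⋃ i ∈ F, U i) * ∑ i ∈ F, ∑ i' ∈ F, μ (U i ∩ U i') := hcs
    _ ≤ μ (⋃ i ∈ F, U i) * (C * X) := by
      gcongr
      rw [Finset.mul_sum]
      exact Finset.sum_le_sum hC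
    _ = C * μ (⋃ i ∈ F, U i) * X := by ring

end CauchySchwarz

section GeometricSums

variable {r : ℝ}

theorem sum_pow_le_of_injOn (hr0 : 0 ≤ r) (hr1 : r < 1) {s : Finset ℕ} {φ : ℕ → ℕ}
    (hφ : Set.InjOn φ s) {l : ℕ} (hl : ∀ a ∈ s, l ≤ φ a) :
    ∑ a ∈ s, r ^ φ a ≤ r ^ l / (1 - r) := by
  rw [← Finset.sum_image hφ]
  obtain ⟨M, hM⟩ := (s.image φ).bddAbove
  refine (Finset.sum_le_sum_of_subset_of_nonneg (fun i hi => ?_)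
    fun i _ _ => pow_nonneg hr0 i).trans (geom_sum_Ico_le_of_lt_one hr0 hr1 (n := M + 1))
  obtain ⟨a, ha, rfl⟩ := Finset.mem_image.mp hi
  exact Finset.mem_Ico.mpr ⟨hl a ha, Nat.lt_succ_of_le (hM hi)⟩

theorem sum_range_pow_dist_le (hr0 : 0 ≤ r) (hr1 : r < 1) (m N : ℕ) :
    ∑ a ∈ Finset.range N, r ^ Nat.dist m a ≤ (1 + r) / (1 - r) := by
  have hle :
      ∑ a ∈ (Finset.range N).filter (· ≤ m), r ^ Nat.dist m a ≤ r ^ 0 / (1 - r) := by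
    have hdist : ∀ a ∈ (Finset.range N).filter (· ≤ m), Nat.dist m a = m - a :=
      fun a ha => by rw [Nat.dist_comm, Nat.dist_eq_sub_of_le (Finset.mem_filter.mp ha).2]
    rw [Finset.sum_congr rfl fun a ha => by rw [hdist a ha]]
    refine sum_pow_le_of_injOn hr0 hr1 (fun a ha b hb hab => ?_) fun _ _ => Nat.zero_le _
    have := (Finset.mem_filter.mp ha).2
    have := (Finset.mem_filter.mp hb).2
    omega
  have hgt :
      ∑ a ∈ (Finset.range N).filter (¬ · ≤ m), r ^ Nat.dist m a ≤ r ^ 1 / (1 - r) := by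
    have hlt : ∀ a ∈ (Finset.range N).filter (¬ · ≤ m), m < a :=
      fun a ha => not_le.mp (Finset.mem_filter.mp ha).2
    rw [Finset.sum_congr rfl fun a ha => by rw [Nat.dist_eq_sub_of_le (hlt a ha).le]]
    refine sum_pow_le_of_injOn hr0 hr1 (fun a ha b hb hab => ?_) fun a ha => ?_
    · have := hlt a ha
      have := hlt b hb
      omega
    · have := hlt a ha
      omega
  rw [← Finset.sum_filter_add_sum_filter_not _ (· ≤ m)]
  calc _ ≤ r ^ 0 / (1 - r) + r ^ 1 / (1 - r) := add_le_add hle hgt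
    _ = (1 + r) / (1 - r) := by ring

theorem sum_piFinset_prod_pow_dist_le (hr0 : 0 ≤ r) (hr1 : r < 1) {n : ℕ} (m : Fin n → ℕ)
    (N : ℕ) :
    ∑ m' ∈ Fintype.piFinset (fun _ : Fin n => Finset.range N),
        ∏ j, r ^ Nat.dist (m j) (m' j) ≤ ((1 + r) / (1 - r)) ^ n := by
  calc _ = ∏ j, ∑ a ∈ Finset.range N, r ^ Nat.dist (m j) a :=
        (Finset.prod_univ_sum (fun _ : Fin n => Finset.range N)
          fun j a => r ^ Nat.dist (m j) a).symm
    _ ≤ ∏ _j : Fin n, (1 + r) / (1 - r) := Finset.prod_le_prod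
        (fun j _ => Finset.sum_nonneg fun a _ => pow_nonneg hr0 _)
        fun j _ => sum_range_pow_dist_le hr0 hr1 (m j) N
    _ = ((1 + r) / (1 - r)) ^ n := by rw [Finset.prod_const, Finset.card_univ, Fintype.card_fin]

end GeometricSums

def digitPositions (s : ℕ → ℤ) (a k : ℕ) : Finset ℤ :=
  (Finset.Ico a k).image s

section DigitPositions

variable {s : ℕ → ℤ} {k : ℕ}

theorem card_digitPositions (hs : StrictMonoOn s (Iic k)) (a : ℕ) :
    (digitPositions s a k).card = k - a := by
  rw [digitPositions, Finset.card_image_of_injOn (hs.injOn.mono fun i hi =>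
    (Finset.mem_Ico.mp hi).2.le), Nat.card_Ico]

theorem exists_of_mem_digitPositions {a : ℕ} {p : ℤ} (hp : p ∈ digitPositions s a k) :
    ∃ i, a ≤ i ∧ i < k ∧ s i = p := by
  obtain ⟨i, hi, rfl⟩ := Finset.mem_image.mp hp
  exact ⟨i, (Finset.mem_Ico.mp hi).1, (Finset.mem_Ico.mp hi).2, rfl⟩

theorem lt_of_mem_digitPositions (hs : StrictMonoOn s (Iic k)) {a : ℕ} {p : ℤ}
    (hp : p ∈ digitPositions s a k) : p < s k := by
  obtain ⟨i, -, hik, rfl⟩ := exists_of_mem_digitPositions hp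
  exact hs (mem_Iic.mpr hik.le) (mem_Iic.mpr le_rfl) hik

end DigitPositions

section Construction

variable {n k : ℕ}

theorem le_of_mem_OmegaNK {m : Fin n → ℕ} (hm : m ∈ OmegaNK n k) (j : Fin n) : m j ≤ k :=
  hm.2 ▸ Finset.single_le_sum (fun i _ => Nat.zero_le (m i)) (Finset.mem_univ j)

section Coordinate

variable {s : ℕ → ℤ} {a : ℕ} {t : ℤ}

theorem card_insert_digitPositions (hs : StrictMonoOn s (Iic k)) (ha : a ≤ k) (ht : t ≤ s a) :
    (insert (t - 1) (digitPositions s a k)).card = k - a + 1 := by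
  rw [Finset.card_insert_of_notMem, card_digitPositions hs]
  intro hmem
  obtain ⟨i, hai, hik, hi⟩ := exists_of_mem_digitPositions hmem
  have := hs.monotoneOn (mem_Iic.mpr ha) (mem_Iic.mpr hik.le) hai
  omega

theorem card_filter_digitPositions_le (hs : StrictMonoOn s (Iic k)) (ha : a ≤ k)
    (ht : t ≤ s a) :
    ((digitPositions s 1 k).filter (· < t - 1)).card ≤ a - 1 := by
  refine (Finset.card_le_card fun p hp => ?_).trans (card_digitPositions (hs.mono ?_) 1).le
  · obtain ⟨hp, hpt⟩ := Finset.mem_filter.mp hp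
    obtain ⟨i, h1i, hik, rfl⟩ := exists_of_mem_digitPositions hp
    have hia : i < a := (hs.lt_iff_lt (mem_Iic.mpr hik.le) (mem_Iic.mpr ha)).mp (by omega)
    exact Finset.mem_image_of_mem s (Finset.mem_Ico.mpr ⟨h1i, hia⟩)
  · exact Iic_subset_Iic.mpr ha

theorem digitBlock_filter_subset (hs : StrictMonoOn s (Iic k)) (ha : a ≤ k) (hta : s (a - 1) < t)
    (ht : t ≤ s a) {x : ℝ}
    (hx : x ∈ digitBlock (insert (t - 1) (digitPositions s a k)) (s k) 0) :
    digitBlock ((digitPositions s 1 k).filter (· < t - 1)) (t - 1) ⌊x / 2 ^ (t - 1)⌋ ⊆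
      digitBlock (digitPositions s 1 k) (s k) 0 := by
  rintro y ⟨hyx, hyP⟩
  have hcongr {p : ℤ} (hp : t - 1 ≤ p) : ⌊y / 2 ^ p⌋ = ⌊x / 2 ^ p⌋ :=
    floor_div_two_zpow_congr hyx hp
  have htk : t - 1 ≤ s k := by
    have := hs.monotoneOn (mem_Iic.mpr ha) (mem_Iic.mpr le_rfl) ha
    omega
  refine ⟨(hcongr htk).trans hx.1, fun p hp => ?_⟩
  by_cases hpt : p < t - 1
  · exact hyP p (Finset.mem_filter.mpr ⟨hp, hpt⟩)
  rw [hcongr (not_lt.mp hpt)]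
  refine hx.2 p ?_
  rcases eq_or_ne p (t - 1) with rfl | hne
  · exact Finset.mem_insert_self _ _
  obtain ⟨i, h1i, hik, rfl⟩ := exists_of_mem_digitPositions hp
  have hai : a - 1 < i :=
    (hs.lt_iff_lt (mem_Iic.mpr (by omega)) (mem_Iic.mpr hik.le)).mp (by omega)
  exact Finset.mem_insert_of_mem
    (Finset.mem_image_of_mem s (Finset.mem_Ico.mpr ⟨by omega, hik⟩))

end Coordinate

/-- The set `E` of the theorem. -/
def testSet (k : ℕ) (s : Fin n → ℕ → ℤ) : Set (Fin n → ℝ) :=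
  univ.pi fun j => digitBlock (digitPositions (s j) 1 k) (s j k) 0

/-- The set `U_m`, where `2 ^ t_j` are the side lengths of the dyadic hull of a box of `B`
attached to `m`. -/
def coverPiece (k : ℕ) (s : Fin n → ℕ → ℤ) (m : Fin n → ℕ) (t : Fin n → ℤ) :
    Set (Fin n → ℝ) :=
  univ.pi fun j => digitBlock (insert (t j - 1) (digitPositions (s j) (m j) k)) (s j k) 0

variable {s : Fin n → ℕ → ℤ}

theorem measurableSet_testSet : MeasurableSet (testSet k s) :=
  .univ_pi fun _ => measurableSet_digitBlock _ _ _

theorem measurableSet_coverPiece (m : Fin n → ℕ) (t : Fin n → ℤ) :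
    MeasurableSet (coverPiece k s m t) :=
  .univ_pi fun _ => measurableSet_digitBlock _ _ _

theorem isBounded_testSet : Bornology.IsBounded (testSet k s) := by
  refine (Metric.isBounded_Icc (0 : Fin n → ℝ) fun j => 2 ^ s j k).subset ?_
  rw [← pi_univ_Icc]
  refine pi_mono fun j _ x hx => ?_
  have := floor_div_two_zpow_eq_iff.mp hx.1
  simp only [Int.cast_zero, zero_mul, zero_add, one_mul, mem_Ico] at this
  exact ⟨this.1, this.2.le⟩

theorem volume_testSet (hs : ∀ j, StrictMonoOn (s j) (Iic k)) (hnk : n ≤ k) :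
    volume (testSet k s) = ENNReal.ofReal (2 ^ (∑ j, s j k - n * ((k : ℤ) - 1))) := by
  rw [testSet, volume_pi_digitBlock fun j p hp => lt_of_mem_digitPositions (hs j) hp]
  congr 2
  rw [Finset.sum_sub_distrib]
  congr 1
  have hcard (j : Fin n) : ((digitPositions (s j) 1 k).card : ℤ) = k - 1 := by
    rw [card_digitPositions (hs j)]
    have := j.pos
    omega
  simp only [hcard, Finset.sum_const, Finset.card_univ, Fintype.card_fin, nsmul_eq_mul]

theorem volume_coverPiece (hs : ∀ j, StrictMonoOn (s j) (Iic k)) {m : Fin n → ℕ}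
    (hm : m ∈ OmegaNK n k) {t : Fin n → ℤ} (ht : ∀ j, t j ≤ s j (m j)) :
    volume (coverPiece k s m t) =
      ENNReal.ofReal (2 ^ (∑ j, s j k - n * ((k : ℤ) + 1) + k)) := by
  rw [coverPiece, volume_pi_digitBlock fun j p hp => ?_]
  · congr 2
    have hcard (j : Fin n) :
        ((insert (t j - 1) (digitPositions (s j) (m j) k)).card : ℤ) = k + 1 - m j := by
      rw [card_insert_digitPositions (hs j) (le_of_mem_OmegaNK hm j) (ht j)]
      have := le_of_mem_OmegaNK hm j
      omega
    have hsum : ∑ j, (m j : ℤ) = k := by exact_mod_cast hm.2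
    simp only [hcard, Finset.sum_sub_distrib, Finset.sum_const, Finset.card_univ,
      Fintype.card_fin, hsum]
    ring
  · rcases Finset.mem_insert.mp hp with rfl | hp
    · have := (hs j).monotoneOn (mem_Iic.mpr (le_of_mem_OmegaNK hm j)) (mem_Iic.mpr le_rfl)
        (le_of_mem_OmegaNK hm j)
      linarith [ht j]
    · exact lt_of_mem_digitPositions (hs j) hp

theorem half_pow_le_prod_pow_dist {m m' : Fin n → ℕ} (hmm' : ∑ j, m j = ∑ j, m' j) :
    (1 / 2 : ℝ) ^ (∑ j, (m j - min (m j) (m' j))) ≤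
      ∏ j, (3 / 4 : ℝ) ^ Nat.dist (m j) (m' j) := by
  have hdist : ∑ j, Nat.dist (m j) (m' j) = 2 * ∑ j, (m j - min (m j) (m' j)) := by
    have hcoord (j : Fin n) :
        Nat.dist (m j) (m' j) = m j - min (m j) (m' j) + (m' j - min (m j) (m' j)) := by
      unfold Nat.dist; omega
    rw [Finset.sum_congr rfl fun j _ => hcoord j, Finset.sum_add_distrib,
      Finset.sum_tsub_distrib _ fun j _ => min_le_left _ _,
      Finset.sum_tsub_distrib _ fun j _ => min_le_right _ _, hmm', two_mul]
  rw [Finset.prod_pow_eq_pow_sum, hdist, pow_mul]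
  exact pow_le_pow_left₀ (by norm_num) (by norm_num) _

theorem coverPiece_inter_subset (m m' : Fin n → ℕ) (t t' : Fin n → ℤ) :
    coverPiece k s m t ∩ coverPiece k s m' t' ⊆
      univ.pi fun j => digitBlock (digitPositions (s j) (min (m j) (m' j)) k) (s j k) 0 := by
  rintro x ⟨hx, hx'⟩ j -
  change x j ∈ digitBlock (digitPositions (s j) (min (m j) (m' j)) k) (s j k) 0
  rcases min_choice (m j) (m' j) with h | h <;> rw [h]
  · exact digitBlock_anti (Finset.subset_insert _ _) _ _ (hx j trivial)
  · exact digitBlock_anti (Finset.subset_insert _ _) _ _ (hx' j trivial)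

theorem volume_coverPiece_inter_le (hs : ∀ j, StrictMonoOn (s j) (Iic k)) {m m' : Fin n → ℕ}
    (hm : m ∈ OmegaNK n k) (hm' : m' ∈ OmegaNK n k) {t : Fin n → ℤ}
    (ht : ∀ j, t j ≤ s j (m j)) (t' : Fin n → ℤ) :
    volume (coverPiece k s m t ∩ coverPiece k s m' t') ≤
      volume (coverPiece k s m t) *
        ENNReal.ofReal (2 ^ n * ∏ j, (3 / 4 : ℝ) ^ Nat.dist (m j) (m' j)) := by
  set A : ℤ := ∑ j, s j k - n * ((k : ℤ) + 1) + k
  set a : ℕ := ∑ j, (m j - min (m j) (m' j))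
  have hexp : ∑ j, (s j k - ((digitPositions (s j) (min (m j) (m' j)) k).card : ℤ)) =
      A + n - a := by
    have hcard (j : Fin n) :
        ((digitPositions (s j) (min (m j) (m' j)) k).card : ℤ) = k - min (m j) (m' j) := by
      rw [card_digitPositions (hs j)]
      have := le_of_mem_OmegaNK hm j
      omega
    have hcoord (j : Fin n) : ((m j - min (m j) (m' j) : ℕ) : ℤ) = m j - min (m j) (m' j) := by
      omega
    have hsum : ∑ j, (m j : ℤ) = k := by exact_mod_cast hm.2
    simp only [a, A, hcard, Nat.cast_sum, hcoord, Finset.sum_sub_distrib, Finset.sum_const,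
      Finset.card_univ, Fintype.card_fin, nsmul_eq_mul, hsum]
    push_cast
    ring
  have hsplit : (2 : ℝ) ^ (A + n - a) = 2 ^ A * (2 ^ n * (1 / 2) ^ a) := by
    rw [zpow_sub₀ two_ne_zero, zpow_add₀ two_ne_zero, zpow_natCast, zpow_natCast, one_div,
      inv_pow, div_eq_mul_inv, mul_assoc]
  calc volume (coverPiece k s m t ∩ coverPiece k s m' t')
      ≤ volume (univ.pi fun j =>
          digitBlock (digitPositions (s j) (min (m j) (m' j)) k) (s j k) 0) :=
        measure_mono (coverPiece_inter_subset m m' t t')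
    _ = ENNReal.ofReal (2 ^ A * (2 ^ n * (1 / 2) ^ a)) := by
      rw [volume_pi_digitBlock fun j p hp => lt_of_mem_digitPositions (hs j) hp, hexp, hsplit]
    _ ≤ ENNReal.ofReal (2 ^ A * (2 ^ n * ∏ j, (3 / 4 : ℝ) ^ Nat.dist (m j) (m' j))) := by
      gcongr
      exact half_pow_le_prod_pow_dist (hm.2.trans hm'.2.symm)
    _ = _ := by
      rw [volume_coverPiece hs hm ht, ENNReal.ofReal_mul (zpow_pos two_pos _).le]

theorem one_div_two_pow_mul_volume_le (hs : ∀ j, StrictMonoOn (s j) (Iic k))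
    {m : Fin n → ℕ} (hm : m ∈ OmegaNK n k) {t : Fin n → ℤ}
    (ht : ∀ j, s j (m j - 1) < t j ∧ t j ≤ s j (m j)) {x : Fin n → ℝ}
    (hx : x ∈ coverPiece k s m t) {Q : BoxInterval n} (hQt : ∀ j, Q.side j ≤ 2 ^ t j)
    (hcube : univ.pi (fun j => {y : ℝ | ⌊y / 2 ^ (t j - 1)⌋ = ⌊x j / 2 ^ (t j - 1)⌋}) ⊆
      Q.toSet) :
    1 / 2 ^ k * volume Q.toSet ≤ volume (testSet k s ∩ Q.toSet) := by
  set V := univ.pi fun j => digitBlock ((digitPositions (s j) 1 k).filter (· < t j - 1))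
    (t j - 1) ⌊x j / 2 ^ (t j - 1)⌋
  have hVE : V ⊆ testSet k s := pi_mono fun j _ => digitBlock_filter_subset (hs j)
    (le_of_mem_OmegaNK hm j) (ht j).1 (ht j).2 (hx j trivial)
  have hVQ : V ⊆ Q.toSet := (pi_mono fun j _ y hy => hy.1).trans hcube
  have hvolV : ENNReal.ofReal (2 ^ (∑ j, t j - k)) ≤ volume V := by
    rw [volume_pi_digitBlock fun j p hp => (Finset.mem_filter.mp hp).2]
    refine ENNReal.ofReal_le_ofReal (zpow_le_zpow_right₀ one_le_two ?_)
    have hsum : ∑ j, (m j : ℤ) = k := by exact_mod_cast hm.2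
    rw [← hsum, ← Finset.sum_sub_distrib]
    refine Finset.sum_le_sum fun j _ => ?_
    have := card_filter_digitPositions_le (hs j) (le_of_mem_OmegaNK hm j) (ht j).2
    have := hm.1 j
    omega
  have hvolQ : volume Q.toSet ≤ ENNReal.ofReal (2 ^ ∑ j, t j) := by
    rw [BoxInterval.volume_toSet, ← prod_two_zpow]
    exact ENNReal.ofReal_le_ofReal
      (Finset.prod_le_prod (fun j _ => (sub_pos.mpr (Q.hab j)).le) fun j _ => hQt j)
  calc 1 / 2 ^ k * volume Q.toSet
      ≤ 1 / 2 ^ k * ENNReal.ofReal (2 ^ ∑ j, t j) := by gcongr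
    _ = ENNReal.ofReal (2 ^ (∑ j, t j - k)) := by
      rw [zpow_sub₀ two_ne_zero, zpow_natCast, ENNReal.ofReal_div_of_pos (by positivity),
        ENNReal.ofReal_pow zero_le_two, ENNReal.ofReal_ofNat, ENNReal.div_eq_inv_mul,
        ENNReal.div_eq_inv_mul, mul_one]
    _ ≤ volume (testSet k s ∩ Q.toSet) := hvolV.trans (measure_mono (subset_inter hVE hVQ))

theorem coverPiece_subset_levelSet {B : Set (BoxInterval n)}
    (hB : ∀ R ∈ B, ∀ v, R.translate v ∈ B) (hs : ∀ j, StrictMonoOn (s j) (Iic k))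
    {m : Fin n → ℕ} (hm : m ∈ OmegaNK n k) {t : Fin n → ℤ}
    (ht : ∀ j, s j (m j - 1) < t j ∧ t j ≤ s j (m j)) {Q : BoxInterval n} (hQ : Q ∈ B)
    (hQt : ∀ j, 2 ^ (t j - 1) ≤ Q.side j ∧ Q.side j ≤ 2 ^ t j) :
    coverPiece k s m t ⊆ {x | 1 / 2 ^ k ≤ maxOp B ((testSet k s).indicator fun _ => 1) x} := by
  intro x hx
  set Q' := Q.translate fun j => (⌊x j / 2 ^ (t j - 1)⌋ + 1) * 2 ^ (t j - 1) - Q.b j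
  have hcube : univ.pi (fun j => {y : ℝ | ⌊y / 2 ^ (t j - 1)⌋ = ⌊x j / 2 ^ (t j - 1)⌋}) ⊆
      Q'.toSet := by
    refine (pi_mono fun j _ y hy => ?_).trans
      (Q.pi_Icc_subset_translate (fun j => (hQt j).1) _)
    obtain ⟨hy₁, hy₂⟩ := floor_div_two_zpow_eq_iff.mp hy
    exact ⟨by linarith, hy₂.le⟩
  have hQ'0 : volume Q'.toSet ≠ 0 := by
    rw [BoxInterval.volume_toSet, ENNReal.ofReal_ne_zero_iff]
    exact Finset.prod_pos fun j _ => sub_pos.mpr (Q'.hab j)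
  refine le_trans ?_ (measure_inter_div_le_maxOp (hB Q hQ _) (hcube fun j _ => rfl)
    measurableSet_testSet)
  rw [ENNReal.le_div_iff_mul_le (Or.inl hQ'0) (Or.inl (Q'.volume_toSet ▸ ENNReal.ofReal_ne_top))]
  exact one_div_two_pow_mul_volume_le hs hm ht hx
    (fun j => (Q.side_translate _ j).trans_le (hQt j).2) hcube

theorem exists_box_of_mem_dyadicSkeleton {B : Set (BoxInterval n)} {R : BoxInterval n}
    (hR : R ∈ dyadicSkeleton B) :
    ∃ Q ∈ B, ∃ t : Fin n → ℤ, ∀ j, R.side j = 2 ^ t j ∧ 2 ^ (t j - 1) < Q.side j ∧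
      Q.side j ≤ 2 ^ t j := by
  obtain ⟨Q, hQ, rfl⟩ := hR
  refine ⟨Q, hQ, fun j => ⌈Real.logb 2 (Q.side j)⌉, fun j => ⟨?_, ?_⟩⟩
  · simp only [dyadicHull, BoxInterval.side]
    ring
  have hpos : 0 < Q.side j := sub_pos.mpr (Q.hab j)
  have hclog := Real.ceil_logb_natCast (b := 2) hpos.le
  rw [Nat.cast_ofNat] at hclog
  dsimp only
  rw [hclog]
  exact ⟨by exact_mod_cast Int.zpow_pred_clog_lt_self one_lt_two hpos,
    by exact_mod_cast Int.self_le_zpow_clog one_lt_two (Q.side j)⟩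

theorem OmegaComplete.exists_scales {B : Set (BoxInterval n)} {Ω : Set (Fin n → ℕ)}
    (h : OmegaComplete B k Ω) :
    ∃ s : Fin n → ℕ → ℤ, (∀ j, StrictMonoOn (s j) (Iic k)) ∧
      ∀ m ∈ Ω, ∃ t : Fin n → ℤ, (∀ j, s j (m j - 1) < t j ∧ t j ≤ s j (m j)) ∧
      ∃ Q ∈ B, ∀ j, 2 ^ (t j - 1) ≤ Q.side j ∧ Q.side j ≤ 2 ^ t j := by
  obtain ⟨s, hs, hΩ⟩ := h
  refine ⟨s, fun j => strictMonoOn_Iic_of_lt_succ fun i hi => by simpa using hs j i hi,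
    fun m hm => ?_⟩
  obtain ⟨R, hR, hside⟩ := hΩ m hm
  obtain ⟨Q, hQ, t, hQt⟩ := exists_box_of_mem_dyadicSkeleton hR
  refine ⟨t, fun j => ?_, Q, hQ, fun j => ⟨(hQt j).2.1.le, (hQt j).2.2⟩⟩
  have := hside j
  rwa [(hQt j).1, mem_Ioc, zpow_lt_zpow_iff_right₀ one_lt_two,
    zpow_le_zpow_iff_right₀ one_lt_two] at this

theorem sum_volume_coverPiece_inter_le (hs : ∀ j, StrictMonoOn (s j) (Iic k))
    {F : Finset (Fin n → ℕ)} (hF : ∀ m ∈ F, m ∈ OmegaNK n k)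
    {t : (Fin n → ℕ) → Fin n → ℤ}
    (ht : ∀ m ∈ F, ∀ j, t m j ≤ s j (m j)) {m : Fin n → ℕ} (hm : m ∈ F) :
    ∑ m' ∈ F, volume (coverPiece k s m (t m) ∩ coverPiece k s m' (t m')) ≤
      ENNReal.ofReal (14 ^ n) * volume (coverPiece k s m (t m)) := by
  have hdist : ∑ m' ∈ F, ∏ j, (3 / 4 : ℝ) ^ Nat.dist (m j) (m' j) ≤ 7 ^ n := by
    have hF_sub : F ⊆ Fintype.piFinset fun _ => Finset.range (k + 1) := fun m' hm' =>
      Fintype.mem_piFinset.mpr fun j =>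
        Finset.mem_range.mpr (Nat.lt_succ_of_le (le_of_mem_OmegaNK (hF m' hm') j))
    refine (Finset.sum_le_sum_of_subset_of_nonneg hF_sub fun _ _ _ => by positivity).trans ?_
    exact (sum_piFinset_prod_pow_dist_le (by norm_num) (by norm_num) m (k + 1)).trans_eq
      (by norm_num)
  calc ∑ m' ∈ F, volume (coverPiece k s m (t m) ∩ coverPiece k s m' (t m'))
      ≤ ∑ m' ∈ F, volume (coverPiece k s m (t m)) *
          ENNReal.ofReal (2 ^ n * ∏ j, (3 / 4 : ℝ) ^ Nat.dist (m j) (m' j)) :=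
        Finset.sum_le_sum fun m' hm' =>
          volume_coverPiece_inter_le hs (hF m hm) (hF m' hm') (ht m hm) (t m')
    _ = volume (coverPiece k s m (t m)) *
          ENNReal.ofReal (2 ^ n * ∑ m' ∈ F, ∏ j, (3 / 4 : ℝ) ^ Nat.dist (m j) (m' j)) := by
        rw [← Finset.mul_sum, ← ENNReal.ofReal_sum_of_nonneg fun _ _ => by positivity,
          ← Finset.mul_sum]
    _ ≤ volume (coverPiece k s m (t m)) * ENNReal.ofReal (2 ^ n * 7 ^ n) := by gcongr
    _ = ENNReal.ofReal (14 ^ n) * volume (coverPiece k s m (t m)) := by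
        rw [mul_comm, ← mul_pow]
        norm_num

theorem ofReal_mul_two_zpow_le_of_card_mul_le {A : ℝ≥0∞} {N : ℕ} (σ : ℤ)
    (h : N * ENNReal.ofReal (2 ^ (σ - n * ((k : ℤ) + 1) + k)) ≤ ENNReal.ofReal (14 ^ n) * A) :
    ENNReal.ofReal (N * 2 ^ k * (1 / 56) ^ n) * ENNReal.ofReal (2 ^ (σ - n * ((k : ℤ) - 1))) ≤
      A := by
  have h14 : ENNReal.ofReal (14 ^ n) ≠ 0 := ENNReal.ofReal_ne_zero_iff.mpr (by positivity)
  refine (ENNReal.mul_le_mul_iff_left h14 ENNReal.ofReal_ne_top).mp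
    (le_trans (le_of_eq ?_) (h.trans_eq (mul_comm _ _)))
  rw [← ENNReal.ofReal_natCast, ← ENNReal.ofReal_mul (by positivity),
    ← ENNReal.ofReal_mul (by positivity), ← ENNReal.ofReal_mul (by positivity)]
  congr 1
  have hexp : (2 : ℝ) ^ (σ - n * ((k : ℤ) - 1)) * 2 ^ k =
      2 ^ (σ - n * ((k : ℤ) + 1) + k) * 4 ^ n := by
    rw [show (4 : ℝ) = 2 ^ (2 : ℤ) by norm_num, ← zpow_natCast, ← zpow_natCast,
      ← zpow_mul, ← zpow_add₀ two_ne_zero, ← zpow_add₀ two_ne_zero]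
    congr 1
    ring
  calc (N : ℝ) * 2 ^ k * (1 / 56) ^ n * 2 ^ (σ - n * ((k : ℤ) - 1)) * 14 ^ n
      = N * (2 ^ (σ - n * ((k : ℤ) - 1)) * 2 ^ k) * (1 / 56 * 14) ^ n := by
        rw [mul_pow]; ring
    _ = N * 2 ^ (σ - n * ((k : ℤ) + 1) + k) * (4 * (1 / 56 * 14)) ^ n := by
        rw [hexp, mul_pow (4 : ℝ)]; ring
    _ = N * 2 ^ (σ - n * ((k : ℤ) + 1) + k) := by norm_num

theorem exists_set_le_volume_levelSet {B : Set (BoxInterval n)}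
    (hB : ∀ R ∈ B, ∀ v, R.translate v ∈ B) (hnk : n ≤ k) {Ω : Set (Fin n → ℕ)}
    (hΩ : Ω ⊆ OmegaNK n k) (hcomp : OmegaComplete B k Ω) :
    ∃ E : Set (Fin n → ℝ), Bornology.IsBounded E ∧ MeasurableSet E ∧ 0 < volume E ∧
      ENNReal.ofReal (Ω.ncard * 2 ^ k * (1 / 56) ^ n) * volume E ≤
        volume {x | 1 / 2 ^ k ≤ maxOp B (E.indicator fun _ => 1) x} := by
  obtain ⟨s, hs, hscales⟩ := hcomp.exists_scales
  choose! t ht hQ using hscales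
  refine ⟨testSet k s, isBounded_testSet, measurableSet_testSet, ?_, ?_⟩
  · rw [volume_testSet hs hnk]
    exact ENNReal.ofReal_pos.mpr (zpow_pos two_pos _)
  have hfin : Ω.Finite := (Set.finite_Iic fun _ => k).subset fun m hm j =>
    le_of_mem_OmegaNK (hΩ hm) j
  set F := hfin.toFinset
  have hF : ∀ m ∈ F, m ∈ Ω := fun m hm => hfin.mem_toFinset.mp hm
  have hcover : ⋃ m ∈ F, coverPiece k s m (t m) ⊆
      {x | 1 / 2 ^ k ≤ maxOp B ((testSet k s).indicator fun _ => 1) x} := by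
    refine iUnion₂_subset fun m hm => ?_
    obtain ⟨Q, hQB, hQt⟩ := hQ m (hF m hm)
    exact coverPiece_subset_levelSet hB hs (hΩ (hF m hm)) (ht m (hF m hm)) hQB hQt
  have hvol : ∀ m ∈ F, volume (coverPiece k s m (t m)) =
      ENNReal.ofReal (2 ^ (∑ j, s j k - n * ((k : ℤ) + 1) + k)) := fun m hm =>
    volume_coverPiece hs (hΩ (hF m hm)) fun j => (ht m (hF m hm) j).2
  have hsum := (sum_measure_le_mul_measure_biUnion volume F
    (fun m _ => measurableSet_coverPiece _ _) (fun m hm => hvol m hm ▸ ENNReal.ofReal_ne_top)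
    (fun m hm => sum_volume_coverPiece_inter_le hs (fun m hm => hΩ (hF m hm))
      (fun m hm j => (ht m (hF m hm) j).2) hm)).trans
    (mul_le_mul_of_nonneg_left (measure_mono hcover) zero_le)
  rw [Finset.sum_congr rfl hvol, Finset.sum_const, nsmul_eq_mul] at hsum
  rw [Set.ncard_eq_toFinset_card Ω hfin, volume_testSet hs hnk]
  exact ofReal_mul_two_zpow_le_of_card_mul_le _ hsum

end Construction

theorem statement6_general (n : ℕ) (B : Set (BoxInterval n)) (hB : IsRareBasis B)
    (k : ℕ → ℕ) (hkn : ∀ j, n ≤ k j)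
    (Ω : ℕ → Set (Fin n → ℕ)) (hΩ : ∀ j, Ω j ⊆ OmegaNK n (k j))
    (hcomp : ∀ j, OmegaComplete B (k j) (Ω j)) :
    ∃ c : ℝ, 0 < c ∧ ∀ j : ℕ,
      ∃ E : Set (Fin n → ℝ), Bornology.IsBounded E ∧ MeasurableSet E ∧ 0 < volume E ∧
        ENNReal.ofReal ((c * ⨅ i : ℕ, ((Ω i).ncard : ℝ) / (k i : ℝ) ^ (n - 1)) *
              ((k j : ℝ) ^ (n - 1) * 2 ^ k j)) * volume E ≤
          volume {x | (1:ℝ≥0∞) / 2 ^ k j ≤ maxOp B (E.indicator fun _ => (1:ℝ)) x} := by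
  refine ⟨(1 / 56) ^ n, by positivity, fun j => ?_⟩
  obtain ⟨E, hEb, hEm, hE0, hE⟩ := exists_set_le_volume_levelSet hB.2 (hkn j) (hΩ j) (hcomp j)
  refine ⟨E, hEb, hEm, hE0, le_trans ?_ hE⟩
  gcongr ENNReal.ofReal ?_ * _
  set I := ⨅ i : ℕ, ((Ω i).ncard : ℝ) / (k i : ℝ) ^ (n - 1)
  have hI : I * (k j : ℝ) ^ (n - 1) ≤ (Ω j).ncard :=
    mul_le_of_le_div₀ (Nat.cast_nonneg _) (by positivity)
      (ciInf_le ⟨0, by rintro _ ⟨i, rfl⟩; positivity⟩ j)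
  calc (1 / 56) ^ n * I * ((k j : ℝ) ^ (n - 1) * 2 ^ k j)
      = I * (k j : ℝ) ^ (n - 1) * 2 ^ k j * (1 / 56) ^ n := by ring
    _ ≤ (Ω j).ncard * 2 ^ k j * (1 / 56) ^ n := by gcongr

/-- Theorem 2: if `B` is `Ω_j`-complete for sets `Ω_j ⊆ Ω_{n,k_j}` with
`inf_j card(Ω_j)/k_j^{n-1} > 0`, then for every `j` there is a bounded set `E_j` of positive
measure with `|{M_B χ_{E_j} ≥ 2^{-k_j}}| ≥ c_B k_j^{n-1} 2^{k_j} |E_j|`, where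
`c_B = cₙ · inf_j card(Ω_j)/k_j^{n-1}`. -/
theorem statement6 (n : ℕ) (hn : 1 ≤ n) (B : Set (BoxInterval n)) (hB : IsRareBasis B)
    (k : ℕ → ℕ) (hk : StrictMono k) (hkn : ∀ j, n ≤ k j)
    (Ω : ℕ → Set (Fin n → ℕ)) (hΩ : ∀ j, Ω j ⊆ OmegaNK n (k j))
    (hcomp : ∀ j, OmegaComplete B (k j) (Ω j))
    (hinf : 0 < ⨅ j : ℕ, ((Ω j).ncard : ℝ) / (k j : ℝ) ^ (n - 1)) :
    ∃ c : ℝ, 0 < c ∧ ∀ j : ℕ,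
      ∃ E : Set (Fin n → ℝ), Bornology.IsBounded E ∧ MeasurableSet E ∧ 0 < volume E ∧
        ENNReal.ofReal ((c * ⨅ i : ℕ, ((Ω i).ncard : ℝ) / (k i : ℝ) ^ (n - 1)) *
              ((k j : ℝ) ^ (n - 1) * 2 ^ k j)) * volume E ≤
          volume {x | (1:ℝ≥0∞) / 2 ^ k j ≤ maxOp B (E.indicator fun _ => (1:ℝ)) x} :=
  statement6_general n B hB k hkn Ω hΩ hcomp

end
end

section
/- Let B₁ be a rare basis in ℝⁿ with the following property: for every k ∈ ℕ there exist increasing integer sequences (s_{1,m})_{m=0}^k,…,(s_{n,m})_{m=0}^k such that for every n-tuple of integers (m₁,…,mₙ) with k ≥ m₁ ≥ m₂ ≥ ⋯ ≥ mₙ ≥ 0 the interval [0,2^{s_{1,m₁}}]×[0,2^{s_{2,m₂}}]×⋯×[0,2^{s_{n,mₙ}}] belongs to B₁. Let B₂ be a translation-invariant collection of one-dimensional intervals whose lengths form an infinite set of dyadic numbers, and set B = B₁×B₂ = {J₁×J₂ : J₁ ∈ B₁, J₂ ∈ B₂} in ℝ^{n+1}. Then there is a constant c > 0 such that for every α ∈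 (0,1) there exists a bounded measurable set E ⊂ ℝ^{n+1} of positive Lebesgue measure with |{x ∈ ℝ^{n+1} : M_B(χ_E)(x) > α}| ≥ c · (1/α) · (1 + log(1/α))ⁿ · |E|. -/
open MeasureTheory Set
open scoped ENNReal

noncomputable section

/-!
Choose `T` with `2 ^ T < 1 / α ≤ 2 ^ (T + 1)` and, in every coordinate `j`, scales
`p j 0 < ⋯ < p j T` along which the hypotheses put boxes into `B₁ × B₂`. In coordinate `j` let
`X_j ⊆ [0, 2 ^ p j T)` be the dyadic Cantor set of the points lying in the left half of their
dyadic cell of length `2 ^ p j t` for all `0 < t ≤ T`, so `|X_j| = 2 ^ (-T) 2 ^ p j T`, and let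
`E = ∏ X_j`. A point of `[0, 2 ^ p j T)` which is in the left halves at the scales `t > m` but in
a right half at the scale `m` lies in a dyadic cell of length `2 ^ p j m` in which `X_j` has
density `2 ^ (-m)`; these points form a set of measure `2 ^ (m - 1) |X_j|`. Hence for each tuple
`(m_j)` with `∑ m_j = T` and `m_0 ≥ ⋯ ≥ m_{n-1}` the corresponding product of such sets has measure
`2 ^ (T - n - 1) |E|`, and each of its points lies in a box of `B₁ × B₂` in which `E` has density
`2 ^ (-T) > α`. These products are disjoint for distinct tuples, and there are at least
`((T + 1) / n²) ^ n` tuples, which gives the bound with `2 ^ T ≈ 1 / α` and `T ≈ log (1 / α)`.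
-/

def dyadicCell (u z : ℤ) : Set ℝ := {x | ⌊x / 2 ^ u⌋ = z}

def leftHalves (v : ℤ) : Set ℝ := {x | Even ⌊x / 2 ^ (v - 1)⌋}

lemma measurableSet_dyadicCell (u z : ℤ) : MeasurableSet (dyadicCell u z) :=
  (Int.measurable_floor.comp (measurable_id.div_const _)) (measurableSet_singleton z)

lemma measurableSet_leftHalves (v : ℤ) : MeasurableSet (leftHalves v) :=
  (Int.measurable_floor.comp (measurable_id.div_const _)) (.of_discrete (s := {k : ℤ | Even k}))

lemma dyadicCell_eq_Ico (u z : ℤ) :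
    dyadicCell u z = Ico ((z : ℝ) * 2 ^ u) (z * 2 ^ u + 2 ^ u) := by
  ext x
  have h : (0 : ℝ) < 2 ^ u := by positivity
  simp only [dyadicCell, mem_ofPred_eq, Int.floor_eq_iff, mem_Ico, le_div_iff₀ h,
    div_lt_iff₀ h, add_mul, one_mul]

lemma volume_dyadicCell (u z : ℤ) : volume (dyadicCell u z) = ENNReal.ofReal (2 ^ u) := by
  rw [dyadicCell_eq_Ico, Real.volume_Ico, add_sub_cancel_left]

lemma floor_div_two_zpow_add (u : ℤ) (k : ℕ) (x : ℝ) :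
    ⌊x / 2 ^ (u + k)⌋ = ⌊x / 2 ^ u⌋ / 2 ^ k := by
  have h := Int.floor_div_natCast (x / 2 ^ u) (2 ^ k)
  push_cast at h
  rw [zpow_add₀ two_ne_zero, zpow_natCast, ← div_div, h]

lemma floor_div_two_zpow_congr_s19 {u v : ℤ} (huv : u ≤ v) {x y : ℝ}
    (h : ⌊x / 2 ^ u⌋ = ⌊y / 2 ^ u⌋) : ⌊x / 2 ^ v⌋ = ⌊y / 2 ^ v⌋ := by
  obtain ⟨k, rfl⟩ := Int.le.dest huv
  rw [floor_div_two_zpow_add, floor_div_two_zpow_add, h]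

lemma dyadicCell_add_one (u z : ℤ) :
    dyadicCell (u + 1) z = dyadicCell u (2 * z) ∪ dyadicCell u (2 * z + 1) := by
  ext x
  have := floor_div_two_zpow_add u 1 x
  simp only [dyadicCell, mem_union, mem_ofPred_eq, Nat.cast_one, pow_one] at this ⊢
  omega

lemma two_mul_volume_dyadicCell_sub_one (v z k : ℤ) :
    2 * volume (dyadicCell (v - 1) k) = volume (dyadicCell v z) := by
  rw [volume_dyadicCell, volume_dyadicCell, ← ENNReal.ofReal_ofNat 2,
    ← ENNReal.ofReal_mul zero_le_two, ← zpow_one_add₀ two_ne_zero, add_sub_cancel]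

lemma dyadicCell_inter_leftHalves (v z : ℤ) :
    dyadicCell v z ∩ leftHalves v = dyadicCell (v - 1) (2 * z) := by
  ext x
  have := floor_div_two_zpow_add (v - 1) 1 x
  simp only [sub_add_cancel, Nat.cast_one, pow_one] at this
  simp only [dyadicCell, leftHalves, mem_inter_iff, mem_ofPred_eq, this, Int.even_iff]
  omega

lemma dyadicCell_diff_leftHalves (v z : ℤ) :
    dyadicCell v z \ leftHalves v = dyadicCell (v - 1) (2 * z + 1) := by
  ext x
  have := floor_div_two_zpow_add (v - 1) 1 x
  simp only [sub_add_cancel, Nat.cast_one, pow_one] at this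
  simp only [dyadicCell, leftHalves, mem_sdiff, mem_ofPred_eq, this, Int.even_iff]
  omega

lemma mem_leftHalves_congr {u v : ℤ} (huv : u < v) {x y : ℝ}
    (h : ⌊x / 2 ^ u⌋ = ⌊y / 2 ^ u⌋) : x ∈ leftHalves v ↔ y ∈ leftHalves v := by
  simp only [leftHalves, mem_ofPred_eq, floor_div_two_zpow_congr_s19 (by omega : u ≤ v - 1) h]

def HasCellDensity (S : Set ℝ) (u : ℤ) (d : ℝ≥0∞) : Prop :=
  ∀ z, volume (S ∩ dyadicCell u z) = d * volume (dyadicCell u z)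

lemma hasCellDensity_univ (u : ℤ) : HasCellDensity univ u 1 := fun z => by
  rw [univ_inter, one_mul]

namespace HasCellDensity

variable {S : Set ℝ} {u v : ℤ} {d : ℝ≥0∞}

lemma add_one (hS : MeasurableSet S) (h : HasCellDensity S u d) :
    HasCellDensity S (u + 1) d := fun z => by
  have hdisj : Disjoint (dyadicCell u (2 * z)) (dyadicCell u (2 * z + 1)) :=
    disjoint_left.2 fun x hx hx' => by simp_all [dyadicCell]
  rw [dyadicCell_add_one, inter_union_distrib_left,
    measure_union (hdisj.mono inter_subset_right inter_subset_right)
      (hS.inter (measurableSet_dyadicCell _ _)),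
    measure_union hdisj (measurableSet_dyadicCell _ _), h, h, mul_add]

lemma mono (hS : MeasurableSet S) (h : HasCellDensity S u d) (huv : u ≤ v) :
    HasCellDensity S v d := by
  induction v, huv using Int.leInduction with
  | base => exact h
  | succ w _ ih => exact ih.add_one hS

lemma half_of_inter_eq (hS : MeasurableSet S) (h : HasCellDensity S u d) (huv : u < v)
    {S' : Set ℝ} (f : ℤ → ℤ) (hS' : ∀ z, S' ∩ dyadicCell v z = S ∩ dyadicCell (v - 1) (f z)) :
    HasCellDensity S' v (2⁻¹ * d) := fun z => by
  rw [hS', h.mono hS (by omega : u ≤ v - 1), ← two_mul_volume_dyadicCell_sub_one v z (f z),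
    ← mul_assoc, mul_comm _ 2, ← mul_assoc,
    ENNReal.mul_inv_cancel two_ne_zero ENNReal.ofNat_ne_top, one_mul]

lemma inter_leftHalves (hS : MeasurableSet S) (h : HasCellDensity S u d) (huv : u < v) :
    HasCellDensity (S ∩ leftHalves v) v (2⁻¹ * d) :=
  h.half_of_inter_eq hS huv (2 * ·) fun z => by
    rw [inter_assoc, inter_comm _ (dyadicCell v z), dyadicCell_inter_leftHalves]

lemma diff_leftHalves (hS : MeasurableSet S) (h : HasCellDensity S u d) (huv : u < v) :
    HasCellDensity (S \ leftHalves v) v (2⁻¹ * d) :=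
  h.half_of_inter_eq hS huv (2 * · + 1) fun z => by
    rw [sdiff_eq, inter_assoc, inter_comm _ (dyadicCell v z), ← sdiff_eq,
      dyadicCell_diff_leftHalves]

end HasCellDensity

def dyadicCantor (p : ℕ → ℤ) (a b : ℕ) : Set ℝ := ⋂ t ∈ Ioc a b, leftHalves (p t)

section DyadicCantor

variable {p : ℕ → ℤ} {a b : ℕ}

lemma measurableSet_dyadicCantor (p : ℕ → ℤ) (a b : ℕ) : MeasurableSet (dyadicCantor p a b) :=
  .biInter (to_countable _) fun t _ => measurableSet_leftHalves (p t)

lemma dyadicCantor_self (p : ℕ → ℤ) (a : ℕ) : dyadicCantor p a a = univ := by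
  simp [dyadicCantor]

lemma dyadicCantor_inter {c : ℕ} (hab : a ≤ b) (hbc : b ≤ c) :
    dyadicCantor p a b ∩ dyadicCantor p b c = dyadicCantor p a c := by
  ext x
  simp only [dyadicCantor, mem_inter_iff, mem_iInter₂, mem_Ioc]
  refine ⟨fun ⟨hab', hbc'⟩ t ht => ?_, fun h => ⟨fun t ht => h t ?_, fun t ht => h t ?_⟩⟩
  · rcases le_or_gt t b with htb | htb
    exacts [hab' t ⟨ht.1, htb⟩, hbc' t ⟨htb, ht.2⟩]
  all_goals omega

lemma dyadicCantor_add_one (hab : a ≤ b) :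
    dyadicCantor p a (b + 1) = dyadicCantor p a b ∩ leftHalves (p (b + 1)) := by
  rw [← dyadicCantor_inter hab b.le_succ]
  congr 1
  ext x
  simp only [dyadicCantor, mem_iInter₂, mem_Ioc]
  refine ⟨fun h => h _ ⟨b.lt_succ_self, le_rfl⟩, fun h t ht => ?_⟩
  obtain rfl : t = b + 1 := by omega
  exact h

lemma mem_dyadicCantor_congr {u : ℤ} (hu : ∀ t ∈ Ioc a b, u < p t) {x y : ℝ}
    (h : ⌊x / 2 ^ u⌋ = ⌊y / 2 ^ u⌋) : x ∈ dyadicCantor p a b ↔ y ∈ dyadicCantor p a b := by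
  simp only [dyadicCantor, mem_iInter₂]
  exact forall₂_congr fun t ht => mem_leftHalves_congr (hu t ht) h

lemma HasCellDensity.inter_dyadicCantor {S : Set ℝ} {d : ℝ≥0∞} (hp : ∀ t < b, p t < p (t + 1))
    (hS : MeasurableSet S) (h : HasCellDensity S (p a) d) (hab : a ≤ b) :
    HasCellDensity (S ∩ dyadicCantor p a b) (p b) (2⁻¹ ^ (b - a) * d) := by
  induction b, hab using Nat.le_induction with
  | base => simpa [dyadicCantor_self] using h
  | succ b hab ih =>
    rw [dyadicCantor_add_one hab, ← inter_assoc, Nat.sub_add_comm hab, pow_succ', mul_assoc]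
    exact (ih fun t ht => hp t (by omega)).inter_leftHalves
      (hS.inter (measurableSet_dyadicCantor p a b)) (hp b (by omega))

end DyadicCantor

def cantorBlock (p : ℕ → ℤ) (T : ℕ) : Set ℝ := dyadicCantor p 0 T ∩ dyadicCell (p T) 0

def escapeBlock (p : ℕ → ℤ) (T m : ℕ) : Set ℝ :=
  (dyadicCantor p m T \ leftHalves (p m)) ∩ dyadicCell (p T) 0

section Blocks

variable {p : ℕ → ℤ} {T : ℕ}

lemma measurableSet_cantorBlock (p : ℕ → ℤ) (T : ℕ) : MeasurableSet (cantorBlock p T) :=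
  (measurableSet_dyadicCantor p 0 T).inter (measurableSet_dyadicCell _ _)

lemma measurableSet_escapeBlock (p : ℕ → ℤ) (T m : ℕ) : MeasurableSet (escapeBlock p T m) :=
  ((measurableSet_dyadicCantor p m T).diff (measurableSet_leftHalves _)).inter
    (measurableSet_dyadicCell _ _)

lemma volume_cantorBlock (hp : ∀ t < T, p t < p (t + 1)) :
    volume (cantorBlock p T) = 2⁻¹ ^ T * volume (dyadicCell (p T) 0) := by
  simpa [cantorBlock] using
    (hasCellDensity_univ (p 0)).inter_dyadicCantor hp .univ T.zero_le 0

lemma two_mul_volume_escapeBlock (hp : ∀ t < T, p t < p (t + 1)) {m : ℕ} (hm : m ≤ T) :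
    2 * volume (escapeBlock p T m) = 2 ^ m * volume (cantorBlock p T) := by
  have hhalf := (hasCellDensity_univ (p m - 1)).diff_leftHalves .univ (sub_one_lt _)
  have h := hhalf.inter_dyadicCantor hp (MeasurableSet.univ.diff (measurableSet_leftHalves _)) hm 0
  have hset : escapeBlock p T m = (univ \ leftHalves (p m)) ∩ dyadicCantor p m T ∩
      dyadicCell (p T) 0 := by
    ext x
    simp only [escapeBlock, mem_inter_iff, mem_sdiff, mem_univ]
    tauto
  have hpow : (2 : ℝ≥0∞)⁻¹ ^ T = 2⁻¹ ^ (T - m) * 2⁻¹ ^ m := by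
    rw [← pow_add, Nat.sub_add_cancel hm]
  have hcancel : (2 : ℝ≥0∞) ^ m * 2⁻¹ ^ m = 1 := by
    rw [← mul_pow, ENNReal.mul_inv_cancel two_ne_zero ENNReal.ofNat_ne_top, one_pow]
  rw [hset, h, volume_cantorBlock hp, hpow]
  calc 2 * (2⁻¹ ^ (T - m) * (2⁻¹ * 1) * volume (dyadicCell (p T) 0))
      = 2 * 2⁻¹ * (2⁻¹ ^ (T - m) * volume (dyadicCell (p T) 0)) := by ring
    _ = 2 ^ m * 2⁻¹ ^ m * (2⁻¹ ^ (T - m) * volume (dyadicCell (p T) 0)) := by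
      rw [hcancel, ENNReal.mul_inv_cancel two_ne_zero ENNReal.ofNat_ne_top]
    _ = _ := by ring

lemma disjoint_escapeBlock {m m' : ℕ} (hmm' : m < m') (hm' : m' ≤ T) :
    Disjoint (escapeBlock p T m) (escapeBlock p T m') := by
  refine disjoint_left.2 fun x hx hx' => hx'.1.2 ?_
  exact mem_iInter₂.1 hx.1.1 m' ⟨hmm', hm'⟩

lemma volume_cantorBlock_inter_dyadicCell (hp : ∀ t < T, p t < p (t + 1)) {m : ℕ}
    (hm : m ≤ T) {x : ℝ} (hx : x ∈ escapeBlock p T m) :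
    volume (cantorBlock p T ∩ dyadicCell (p m) ⌊x / 2 ^ p m⌋) =
      2⁻¹ ^ m * volume (dyadicCell (p m) ⌊x / 2 ^ p m⌋) := by
  have hmono := strictMonoOn_Iic_of_lt_succ (ψ := p) (n := T) fun t ht => by
    simpa [Order.succ_eq_add_one] using hp t ht
  have hset : cantorBlock p T ∩ dyadicCell (p m) ⌊x / 2 ^ p m⌋ =
      (univ ∩ dyadicCantor p 0 m) ∩ dyadicCell (p m) ⌊x / 2 ^ p m⌋ := by
    ext y
    simp only [cantorBlock, univ_inter, mem_inter_iff, dyadicCell, mem_ofPred_eq,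
      ← dyadicCantor_inter m.zero_le hm]
    refine ⟨fun h => ⟨h.1.1.1, h.2⟩, fun ⟨hy, hyx⟩ => ⟨⟨⟨hy, ?_⟩, ?_⟩, hyx⟩⟩
    · refine (mem_dyadicCantor_congr (fun t ht => ?_) hyx.symm).1 hx.1.1
      exact hmono (mem_Iic.2 hm) (mem_Iic.2 ht.2) ht.1
    · rw [floor_div_two_zpow_congr_s19 (hmono.monotoneOn (mem_Iic.2 hm) (mem_Iic.2 le_rfl) hm) hyx]
      exact hx.2
  simpa [hset] using
    (hasCellDensity_univ (p 0)).inter_dyadicCantor (fun t ht => hp t (by omega)) .univ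
      m.zero_le ⌊x / 2 ^ p m⌋

end Blocks

def cantorBox {d : ℕ} (p : Fin d → ℕ → ℤ) (T : ℕ) : Set (Fin d → ℝ) :=
  univ.pi fun j => cantorBlock (p j) T

lemma measurableSet_cantorBox {d : ℕ} (p : Fin d → ℕ → ℤ) (T : ℕ) :
    MeasurableSet (cantorBox p T) :=
  .univ_pi fun j => measurableSet_cantorBlock (p j) T

lemma le_maxOp_indicator {d : ℕ} {B : Set (BoxInterval d)} {E : Set (Fin d → ℝ)}
    (hE : MeasurableSet E) {R : BoxInterval d} (hR : R ∈ B) {x : Fin d → ℝ} (hx : x ∈ R.toSet) :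
    volume (E ∩ R.toSet) / volume R.toSet ≤ maxOp B (E.indicator fun _ => 1) x := by
  refine le_iSup₂_of_le R hR (le_iSup_of_le hx (le_of_eq ?_))
  have hf : (fun y => ENNReal.ofReal |E.indicator (fun _ => (1 : ℝ)) y|) =
      E.indicator fun _ => 1 := by
    funext y
    by_cases hy : y ∈ E <;> simp [hy]
  rw [hf, lintegral_indicator hE, setLIntegral_one, Measure.restrict_apply hE]

section LevelSet

variable {d T : ℕ} {B : Set (BoxInterval d)} {p : Fin d → ℕ → ℤ}

lemma le_of_sum_eq {m : Fin d → ℕ} (hm : ∑ j, m j = T) (j : Fin d) : m j ≤ T :=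
  hm ▸ Finset.single_le_sum (by simp) (Finset.mem_univ j)

lemma pi_escapeBlock_subset_levelSet (hp : ∀ j, ∀ t < T, p j t < p j (t + 1))
    {m : Fin d → ℕ} (hm : ∑ j, m j = T)
    (hB : ∀ C : Fin d → ℝ, ∃ R ∈ B, R.toSet = univ.pi fun j => Icc (C j) (C j + 2 ^ p j (m j)))
    {α : ℝ} (hα : ENNReal.ofReal α < 2⁻¹ ^ T) :
    univ.pi (fun j => escapeBlock (p j) T (m j)) ⊆
      {x | ENNReal.ofReal α < maxOp B ((cantorBox p T).indicator fun _ => 1) x} := by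
  intro x hx
  set z : Fin d → ℤ := fun j => ⌊x j / 2 ^ p j (m j)⌋
  obtain ⟨R, hRB, hR⟩ := hB fun j => z j * 2 ^ p j (m j)
  have hcell (j : Fin d) : dyadicCell (p j (m j)) (z j) ⊆
      Icc (z j * 2 ^ p j (m j)) (z j * 2 ^ p j (m j) + 2 ^ p j (m j)) := by
    rw [dyadicCell_eq_Ico]
    exact Ico_subset_Icc_self
  have hxR : x ∈ R.toSet := hR ▸ fun j _ => hcell j rfl
  have hvolR : volume R.toSet = ∏ j, volume (dyadicCell (p j (m j)) (z j)) := by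
    rw [hR, volume_pi_pi]
    simp only [dyadicCell_eq_Ico, Real.volume_Icc, Real.volume_Ico]
  have hR0 : volume R.toSet ≠ 0 := by
    simp only [hvolR, volume_dyadicCell, Finset.prod_ne_zero_iff, ne_eq, ENNReal.ofReal_eq_zero,
      not_le]
    exact fun j _ => by positivity
  have hRtop : volume R.toSet ≠ ⊤ := by
    simp only [hvolR, volume_dyadicCell]
    exact ENNReal.prod_ne_top fun j _ => ENNReal.ofReal_ne_top
  have hdensity : 2⁻¹ ^ T * volume R.toSet ≤ volume (cantorBox p T ∩ R.toSet) := by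
    have hpow : (2 : ℝ≥0∞)⁻¹ ^ T = ∏ j, 2⁻¹ ^ m j := by rw [Finset.prod_pow_eq_pow_sum, hm]
    rw [hvolR, hR, cantorBox, ← pi_inter_distrib, volume_pi_pi, hpow, ← Finset.prod_mul_distrib]
    gcongr with j
    rw [← volume_cantorBlock_inter_dyadicCell (hp j) (le_of_sum_eq hm j) (hx j trivial)]
    exact measure_mono (inter_subset_inter_right _ (hcell j))
  calc ENNReal.ofReal α < 2⁻¹ ^ T := hα
    _ ≤ volume (cantorBox p T ∩ R.toSet) / volume R.toSet :=
      (ENNReal.le_div_iff_mul_le (.inl hR0) (.inl hRtop)).2 hdensity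
    _ ≤ _ := le_maxOp_indicator (measurableSet_cantorBox p T) hRB hxR

theorem card_mul_volume_cantorBox_le (hp : ∀ j, ∀ t < T, p j t < p j (t + 1))
    (F : Finset (Fin d → ℕ)) (hF : ∀ m ∈ F, ∑ j, m j = T)
    (hB : ∀ m ∈ F, ∀ C : Fin d → ℝ,
      ∃ R ∈ B, R.toSet = univ.pi fun j => Icc (C j) (C j + 2 ^ p j (m j)))
    {α : ℝ} (hα : ENNReal.ofReal α < 2⁻¹ ^ T) :
    F.card * 2 ^ T * volume (cantorBox p T) ≤
      2 ^ d * volume {x | ENNReal.ofReal α < maxOp B ((cantorBox p T).indicator fun _ => 1) x} := by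
  set event : (Fin d → ℕ) → Set (Fin d → ℝ) := fun m => univ.pi fun j => escapeBlock (p j) T (m j)
  have hvol : ∀ m ∈ F, 2 ^ d * volume (event m) = 2 ^ T * volume (cantorBox p T) := by
    intro m hm
    have hpow : (2 : ℝ≥0∞) ^ T = ∏ j, 2 ^ m j := by rw [Finset.prod_pow_eq_pow_sum, hF m hm]
    have hpow' : (2 : ℝ≥0∞) ^ d = ∏ _j : Fin d, 2 := by simp
    rw [volume_pi_pi, cantorBox, volume_pi_pi, hpow, hpow', ← Finset.prod_mul_distrib,
      ← Finset.prod_mul_distrib]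
    exact Finset.prod_congr rfl fun j _ =>
      two_mul_volume_escapeBlock (hp j) (le_of_sum_eq (hF m hm) j)
  have hdisj : (F : Set (Fin d → ℕ)).PairwiseDisjoint event := by
    intro m hm m' hm' hne
    obtain ⟨j, hj⟩ := Function.ne_iff.1 hne
    refine disjoint_univ_pi.2 ⟨j, ?_⟩
    rcases hj.lt_or_gt with h | h
    exacts [disjoint_escapeBlock h (le_of_sum_eq (hF m' hm') j),
      (disjoint_escapeBlock h (le_of_sum_eq (hF m hm) j)).symm]
  calc F.card * 2 ^ T * volume (cantorBox p T) = ∑ m ∈ F, 2 ^ d * volume (event m) := by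
        rw [Finset.sum_congr rfl hvol, Finset.sum_const, nsmul_eq_mul, mul_assoc]
    _ = 2 ^ d * volume (⋃ m ∈ F, event m) := by
        rw [measure_biUnion_finset hdisj fun m _ =>
          .univ_pi fun j => measurableSet_escapeBlock (p j) T (m j), Finset.mul_sum]
    _ ≤ _ := by
        gcongr
        exact iUnion₂_subset fun m hm => pi_escapeBlock_subset_levelSet hp (hF m hm) (hB m hm) hα

end LevelSet

lemma isBounded_cantorBox {d : ℕ} (p : Fin d → ℕ → ℤ) (T : ℕ) :
    Bornology.IsBounded (cantorBox p T) :=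
  (Bornology.IsBounded.pi fun j => (Metric.isBounded_Ico (0 : ℝ) (2 ^ p j T))).subset
    (pi_mono fun j _ => by
      simp [cantorBlock, dyadicCell_eq_Ico])

lemma volume_cantorBox_pos {d T : ℕ} {p : Fin d → ℕ → ℤ}
    (hp : ∀ j, ∀ t < T, p j t < p j (t + 1)) : 0 < volume (cantorBox p T) := by
  simp only [cantorBox, volume_pi_pi, volume_cantorBlock (hp _), volume_dyadicCell,
    CanonicallyOrderedAdd.prod_pos, Finset.mem_univ, true_implies]
  exact fun j => ENNReal.mul_pos (by simp) (ENNReal.ofReal_pos.2 (by positivity)).ne'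

def admissibleTuples (n T : ℕ) : Finset (Fin (n + 1) → ℕ) :=
  {m ∈ Fintype.piFinset fun _ => Finset.range (T + 1) |
    ∑ j, m j = T ∧ ∀ i j : Fin n, i ≤ j → m j.castSucc ≤ m i.castSucc}

/-- Spacing the first `n` entries `K` apart turns any `g` with entries at most `K` into a
decreasing tuple, recoverable from its entries. -/
def staircase (n K T : ℕ) (g : Fin n → ℕ) : Fin (n + 1) → ℕ :=
  Fin.snoc (fun j : Fin n => (n - 1 - j) * K + g j) (T - ∑ j : Fin n, ((n - 1 - j) * K + g j))

lemma staircase_injective (n K T : ℕ) : Function.Injective (staircase n K T) := fun g g' h =>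
  funext fun j => by simpa [staircase] using congrFun h j.castSucc

lemma staircase_mem_admissibleTuples {n K T : ℕ} (hK : n ^ 2 * K ≤ T) {g : Fin n → ℕ}
    (hg : ∀ j, g j ≤ K) : staircase n K T g ∈ admissibleTuples n T := by
  have hentry (j : Fin n) : (n - 1 - j) * K + g j ≤ (n - j) * K := by
    calc (n - 1 - j) * K + g j ≤ (n - 1 - j + 1) * K := by rw [add_one_mul]; gcongr; exact hg j
      _ = (n - j) * K := by congr 1; omega
  have hsum : ∑ j : Fin n, ((n - 1 - j) * K + g j) ≤ T :=
    calc ∑ j : Fin n, ((n - 1 - j) * K + g j) ≤ ∑ _j : Fin n, n * K :=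
          Finset.sum_le_sum fun j _ => (hentry j).trans (Nat.mul_le_mul_right _ (by omega))
      _ = n ^ 2 * K := by simp [sq, mul_assoc]
      _ ≤ T := hK
  have htotal : ∑ j, staircase n K T g j = T := by
    simp only [staircase, Fin.sum_univ_castSucc, Fin.snoc_castSucc, Fin.snoc_last]
    omega
  simp only [admissibleTuples, Finset.mem_filter, Fintype.mem_piFinset, Finset.mem_range,
    Nat.lt_succ_iff]
  refine ⟨le_of_sum_eq htotal, htotal, fun i j hij => ?_⟩
  simp only [staircase, Fin.snoc_castSucc]
  rcases hij.lt_or_eq with hij | rfl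
  · exact ((hentry j).trans (Nat.mul_le_mul_right _ (by omega))).trans (Nat.le_add_right _ _)
  · exact le_rfl

lemma card_admissibleTuples_ge (n T : ℕ) :
    (((T : ℝ) + 1) / n ^ 2) ^ n ≤ (admissibleTuples n T).card := by
  set K := T / n ^ 2
  have hcard : (K + 1) ^ n ≤ (admissibleTuples n T).card := by
    calc (K + 1) ^ n = (Finset.univ : Finset (Fin n → Fin (K + 1))).card := by simp
      _ ≤ _ := Finset.card_le_card_of_injOn (fun g j => staircase n K T (fun i => g i) j)
          (fun g _ => staircase_mem_admissibleTuples (Nat.mul_div_le T _)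
            fun j => Nat.lt_succ_iff.1 (g j).isLt)
          fun g _ g' _ h => funext fun j => Fin.ext (congrFun (staircase_injective n K T h) j)
  have hbase : ((T : ℝ) + 1) / n ^ 2 ≤ K + 1 := by
    rcases n.eq_zero_or_pos with rfl | hn
    · simp only [CharP.cast_eq_zero, ne_eq, OfNat.ofNat_ne_zero, not_false_eq_true, zero_pow,
        div_zero]
      positivity
    have h : T + 1 ≤ (K + 1) * n ^ 2 := by
      rw [mul_comm]
      exact Nat.lt_mul_div_succ T (by positivity)
    rw [div_le_iff₀ (by positivity)]
    exact_mod_cast h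
  exact (pow_le_pow_left₀ (by positivity) hbase n).trans (by exact_mod_cast hcard)

lemma exists_zpow_mem_of_infinite {Λ : Set ℝ} (hinf : Λ.Infinite)
    (hdy : Λ ⊆ {x | ∃ s : ℤ, x = 2 ^ s}) (T : ℕ) :
    ∃ q : ℕ → ℤ, (∀ t < T, q t < q (t + 1)) ∧ ∀ t, (2 : ℝ) ^ q t ∈ Λ := by
  have hexp : {s : ℤ | (2 : ℝ) ^ s ∈ Λ}.Infinite := by
    refine Infinite.of_image (fun s : ℤ => (2 : ℝ) ^ s) (hinf.mono fun x hx => ?_)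
    obtain ⟨s, rfl⟩ := hdy hx
    exact ⟨s, hx, rfl⟩
  obtain ⟨F, hFsub, hF⟩ := hexp.exists_subset_card_eq (T + 1)
  refine ⟨fun t => F.orderEmbOfFin hF ⟨min t T, by omega⟩, fun t ht => ?_,
    fun t => hFsub (F.orderEmbOfFin_mem hF _)⟩
  exact (F.orderEmbOfFin hF).strictMono (Fin.mk_lt_mk.2 (by omega))

lemma exists_mem_prodBasis_toSet_eq {n : ℕ} {B1 : Set (BoxInterval n)} {B2 : Set (BoxInterval 1)}
    (hB1 : ∀ R ∈ B1, ∀ v, R.translate v ∈ B1) (hB2 : ∀ I ∈ B2, ∀ v, I.translate v ∈ B2)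
    {J : BoxInterval n} (hJ : J ∈ B1) {I : BoxInterval 1} (hI : I ∈ B2) (C : Fin (n + 1) → ℝ) :
    ∃ R ∈ prodBasis B1 B2,
      R.toSet = univ.pi fun j =>
        Icc (C j) (C j + Fin.snoc (α := fun _ => ℝ) J.side (I.side 0) j) := by
  refine ⟨prodBox (J.translate fun i => C i.castSucc - J.a i)
    (I.translate fun _ => C (Fin.last n) - I.a 0), ⟨_, hB1 J hJ _, _, hB2 I hI _, rfl⟩, ?_⟩
  refine pi_congr rfl fun j _ => ?_
  induction j using Fin.lastCases <;>
    simp [prodBox, BoxInterval.translate, BoxInterval.side, add_sub_left_comm, add_comm]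

lemma exists_nat_lt_le_add_one {L : ℝ} (hL : 0 < L) : ∃ T : ℕ, (T : ℝ) < L ∧ L ≤ T + 1 := by
  refine ⟨⌈L⌉₊ - 1, ?_, ?_⟩ <;>
    rw [Nat.cast_sub (Nat.one_le_iff_ne_zero.2 (Nat.ceil_pos.2 hL).ne'), Nat.cast_one]
  · linarith [Nat.ceil_lt_add_one hL.le]
  · linarith [Nat.le_ceil L]

lemma sq_pow_self_pos (n : ℕ) : (0 : ℝ) < ((n : ℝ) ^ 2) ^ n := by
  rcases n.eq_zero_or_pos with rfl | hn
  · simp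
  · positivity

lemma const_mul_le_of_le_two_pow {n T : ℕ} {x L N : ℝ} (hx : x ≤ 2 ^ (T + 1)) (hL0 : 0 ≤ L)
    (hL : L ≤ T + 1) (hN : (((T : ℝ) + 1) / n ^ 2) ^ n ≤ N) :
    ((2 * n ^ 2) ^ n * 2 ^ (n + 2) : ℝ)⁻¹ * x * (1 + L) ^ n ≤ N * 2 ^ T / 2 ^ (n + 1) := by
  have hn := (sq_pow_self_pos n).ne'
  calc ((2 * n ^ 2) ^ n * 2 ^ (n + 2) : ℝ)⁻¹ * x * (1 + L) ^ n
      ≤ ((2 * n ^ 2) ^ n * 2 ^ (n + 2) : ℝ)⁻¹ * 2 ^ (T + 1) * (2 * (T + 1)) ^ n := by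
        gcongr
        linarith
    _ = 2 ^ T / 2 ^ (n + 1) * (((T : ℝ) + 1) / n ^ 2) ^ n := by
        rw [mul_pow, mul_pow, div_pow]
        field_simp
        ring
    _ ≤ N * 2 ^ T / 2 ^ (n + 1) := by
        rw [mul_comm, mul_div_assoc]
        gcongr

lemma ofReal_lt_inv_two_pow {α : ℝ} (hα : 0 < α) {T : ℕ} (hT : (T : ℝ) < Real.logb 2 (1 / α)) :
    ENNReal.ofReal α < 2⁻¹ ^ T := by
  rw [Real.lt_logb_iff_rpow_lt one_lt_two (by positivity), Real.rpow_natCast,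
    lt_one_div (by positivity) hα] at hT
  rw [← ENNReal.ofReal_ofNat 2, ← ENNReal.ofReal_inv_of_pos two_pos,
    ← ENNReal.ofReal_pow (by norm_num)]
  exact (ENNReal.ofReal_lt_ofReal_iff (by positivity)).2 (by simpa [inv_pow] using hT)

lemma one_div_le_two_pow {α : ℝ} (hα : 0 < α) {T : ℕ} (hT : Real.logb 2 (1 / α) ≤ T + 1) :
    1 / α ≤ 2 ^ (T + 1) := by
  rw [Real.logb_le_iff_le_rpow one_lt_two (by positivity)] at hT
  exact_mod_cast hT

lemma exists_mem_prodBasis_of_mem_admissibleTuples {n T : ℕ} {B1 : Set (BoxInterval n)}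
    {B2 : Set (BoxInterval 1)} (hB1 : ∀ R ∈ B1, ∀ v, R.translate v ∈ B1)
    (hB2 : ∀ I ∈ B2, ∀ v, I.translate v ∈ B2) {s : Fin n → ℕ → ℤ}
    (hs : ∀ m : Fin n → ℕ, (∀ j, m j ≤ T) → (∀ i j : Fin n, i ≤ j → m j ≤ m i) →
      (⟨fun _ => 0, fun j => (2 : ℝ) ^ s j (m j), fun j => by positivity⟩ : BoxInterval n) ∈ B1)
    {q : ℕ → ℤ} (hq : ∀ t, (2 : ℝ) ^ q t ∈ {l : ℝ | ∃ I ∈ B2, I.side 0 = l})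
    {m : Fin (n + 1) → ℕ} (hm : m ∈ admissibleTuples n T) (C : Fin (n + 1) → ℝ) :
    ∃ R ∈ prodBasis B1 B2,
      R.toSet = univ.pi fun j =>
        Icc (C j) (C j + 2 ^ Fin.snoc (α := fun _ => ℕ → ℤ) s q j (m j)) := by
  simp only [admissibleTuples, Finset.mem_filter, Fintype.mem_piFinset, Finset.mem_range] at hm
  obtain ⟨I, hI, hIside⟩ := hq (m (Fin.last n))
  have hJ := hs (fun i => m i.castSucc) (fun i => Nat.lt_succ_iff.1 (hm.1 _)) hm.2.2
  obtain ⟨R, hR, hRset⟩ := exists_mem_prodBasis_toSet_eq hB1 hB2 hJ hI C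
  refine ⟨R, hR, hRset.trans (pi_congr rfl fun j _ => ?_)⟩
  induction j using Fin.lastCases with
  | last => simp [hIside]
  | cast i => simp [BoxInterval.side]

/-- Application VIII (estimate part): sharp weak type `L(1+log⁺L)ⁿ` lower bound in
`ℝ^{n+1}` for the product basis `B₁ × B₂`. -/
theorem statement19 (n : ℕ) (B1 : Set (BoxInterval n)) (hB1 : IsRareBasis B1)
    (hprop : ∀ k : ℕ, ∃ s : Fin n → ℕ → ℤ,
      (∀ j, ∀ m, m < k → s j m < s j (m + 1)) ∧
      ∀ m : Fin n → ℕ, (∀ j, m j ≤ k) → (∀ i j : Fin n, i ≤ j → m j ≤ m i) →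
        (⟨fun _ => 0, fun j => (2:ℝ) ^ s j (m j),
          fun j => by positivity⟩ : BoxInterval n) ∈ B1)
    (B2 : Set (BoxInterval 1))
    (hB2trans : ∀ I ∈ B2, ∀ v : Fin 1 → ℝ, I.translate v ∈ B2)
    (hB2inf : {l : ℝ | ∃ I ∈ B2, I.side 0 = l}.Infinite)
    (hB2dyadic : {l : ℝ | ∃ I ∈ B2, I.side 0 = l} ⊆ {x | ∃ s : ℤ, x = (2:ℝ) ^ s}) :
    ∃ c : ℝ, 0 < c ∧ ∀ α : ℝ, 0 < α → α < 1 →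
      ∃ E : Set (Fin (n + 1) → ℝ), Bornology.IsBounded E ∧ MeasurableSet E ∧ 0 < volume E ∧
        ENNReal.ofReal (c * (1 / α) * (1 + Real.logb 2 (1 / α)) ^ n) * volume E ≤
          volume {x | ENNReal.ofReal α <
            maxOp (prodBasis B1 B2) (E.indicator fun _ => (1:ℝ)) x} := by
  have hc : 0 < ((2 * (n : ℝ) ^ 2) ^ n * 2 ^ (n + 2))⁻¹ := by
    rw [mul_pow]
    exact inv_pos.2 (mul_pos (mul_pos (by positivity) (sq_pow_self_pos n)) (by positivity))
  refine ⟨_, hc, fun α hα0 hα1 => ?_⟩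
  have hL : 0 < Real.logb 2 (1 / α) := Real.logb_pos one_lt_two (one_lt_one_div hα0 hα1)
  obtain ⟨T, hTL, hLT⟩ := exists_nat_lt_le_add_one hL
  obtain ⟨s, hs, hsB1⟩ := hprop T
  obtain ⟨q, hq, hqB2⟩ := exists_zpow_mem_of_infinite hB2inf hB2dyadic T
  set p : Fin (n + 1) → ℕ → ℤ := Fin.snoc s q
  have hp : ∀ j, ∀ t < T, p j t < p j (t + 1) :=
    Fin.lastCases (by simpa [p] using hq) fun i => by simpa [p] using hs i
  have hB (m) (hm : m ∈ admissibleTuples n T) := exists_mem_prodBasis_of_mem_admissibleTuples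
    hB1.2 hB2trans hsB1 hqB2 hm
  have hlevel := card_mul_volume_cantorBox_le hp _ (fun m hm => (Finset.mem_filter.1 hm).2.1) hB
    (ofReal_lt_inv_two_pow hα0 hTL)
  refine ⟨cantorBox p T, isBounded_cantorBox p T, measurableSet_cantorBox p T,
    volume_cantorBox_pos hp, ?_⟩
  calc _ ≤ ENNReal.ofReal ((admissibleTuples n T).card * 2 ^ T / 2 ^ (n + 1)) *
        volume (cantorBox p T) := by
        gcongr
        exact const_mul_le_of_le_two_pow (one_div_le_two_pow hα0 hLT) hL.le hLT
          (card_admissibleTuples_ge n T)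
    _ ≤ _ := by
        rw [ENNReal.ofReal_div_of_pos (by positivity), ← ENNReal.mul_div_right_comm]
        refine ENNReal.div_le_of_le_mul' ?_
        simpa [ENNReal.ofReal_mul, ENNReal.ofReal_pow] using hlevel
end
end
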